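/- arXiv:2311.12335 — 5 statements merged into one kernel-verified Lean document; each statement's English description precedes it below -/
import Mathlib

section
/- Let n, c, s, p and n₁, …, n_c be positive integers with n₁ ≥ 2p, n₁ ≥ n₂ ≥ ⋯ ≥ n_c ≥ p and n₁ + n₂ + ⋯ + n_c = n − s. Then λ₁(D(K_s ∨ (K_{n₁} + K_{n₂} + ⋯ + K_{n_c}))) ≥ λ₁(D(K_s ∨ (K_{n−s−p(c−1)} + (c−1)K_p))), with equality if and only if (n₁, n₂, …, n_c) = (n−s−p(c−1), p, …, p). -/
open SimpleGraph Finset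

/-- The distance matrix of a graph: the `(i,j)` entry is the graph distance from `i` to `j`. -/
noncomputable def distMatrix {V : Type*} [Fintype V] (G : SimpleGraph V) : Matrix V V ℝ :=
  fun i j => (G.dist i j : ℝ)

/-- The distance spectral radius `λ₁(D(G))`: the largest eigenvalue of the distance matrix. -/
noncomputable def distSpecRad {V : Type*} [Fintype V] (G : SimpleGraph V) : ℝ :=
  sSup {μ : ℝ | ∃ v : V → ℝ, v ≠ 0 ∧ (distMatrix G).mulVec v = μ • v}

/-- The join `G ∨ H` of two graphs: all edges between the parts are added. -/
def graphJoin {α β : Type*} (G : SimpleGraph α) (H : SimpleGraph β) :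
    SimpleGraph (α ⊕ β) where
  Adj x y :=
    match x, y with
    | Sum.inl a, Sum.inl a' => G.Adj a a'
    | Sum.inr b, Sum.inr b' => H.Adj b b'
    | Sum.inl _, Sum.inr _ => True
    | Sum.inr _, Sum.inl _ => True
  symm := ⟨by rintro (a | a) (b | b) h <;> first | exact G.adj_symm h | exact H.adj_symm h | trivial⟩
  loopless := ⟨by rintro (a | a) h <;> first | exact G.irrefl h | exact H.irrefl h⟩

/-- The disjoint union `G + H` of two graphs. -/
def graphSum {α β : Type*} (G : SimpleGraph α) (H : SimpleGraph β) :
    SimpleGraph (α ⊕ β) where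
  Adj x y :=
    match x, y with
    | Sum.inl a, Sum.inl a' => G.Adj a a'
    | Sum.inr b, Sum.inr b' => H.Adj b b'
    | _, _ => False
  symm := ⟨by rintro (a | a) (b | b) h <;> first | exact G.adj_symm h | exact H.adj_symm h | exact h⟩
  loopless := ⟨by rintro (a | a) h <;> first | exact G.irrefl h | exact H.irrefl h⟩

/-- `m` pairwise disjoint copies of the complete graph `K_p`. -/
def repK (m p : ℕ) : SimpleGraph (Fin m × Fin p) where
  Adj x y := x.1 = y.1 ∧ x ≠ y
  symm := ⟨fun _ _ h => ⟨h.1.symm, h.2.symm⟩⟩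
  loopless := ⟨fun _ h => h.2 rfl⟩

/-- The disjoint union of cliques `K_{m 0} + K_{m 1} + ⋯`. -/
def cliquesGraph {c : ℕ} (m : Fin c → ℕ) : SimpleGraph (Σ i, Fin (m i)) where
  Adj x y := x.1 = y.1 ∧ x ≠ y
  symm := ⟨fun _ _ h => ⟨h.1.symm, h.2.symm⟩⟩
  loopless := ⟨fun _ h => h.2 rfl⟩

/-- `G` is `t`-tough: whenever deleting a vertex set `S` disconnects the graph,
`|S| ≥ t · c(G - S)`. -/
def IsTTough {V : Type*} [Fintype V] (t : ℝ) (G : SimpleGraph V) : Prop :=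
  ∀ S : Finset V, ¬ (G.induce ((S : Set V)ᶜ)).Connected →
    t * Nat.card (G.induce ((S : Set V)ᶜ)).ConnectedComponent ≤ (S.card : ℝ)

/-!
The distance matrix of `K_s ∨ (K_{k₁} + ⋯ + K_{k_c})` has entries in `{0, 1, 2}` and a positive
eigenvector that is constant on `K_s` and on each clique: for an eigenvalue `t > s - 1` it takes
the value `1 / (t + kᵢ + 1)` on `K_{kᵢ}` and `f(t) / (t - s + 1)` on `K_s`, where
`f(t) = ∑ kᵢ / (t + kᵢ + 1)`, and the eigenvalue equations reduce to `f(t) (2 + s/(t-s+1)) = 1`.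
A positive eigenvector of a symmetric nonnegative matrix belongs to its largest eigenvalue, so the
distance spectral radius is the unique root of this strictly decreasing function on `(s - 1, ∞)`.

Since `x ↦ x / (t + x + 1)` is strictly concave, moving vertices from the smaller cliques into
the first one (keeping every size `≥ p`) decreases `f(t)` strictly as soon as a clique other than
the first has more than `p` vertices. This lowers the secular function, hence its root.
-/

open Matrix

theorem Matrix.le_of_mulVec_eq_smul_of_pos {V : Type*} [Fintype V] {A : Matrix V V ℝ}
    (hA : A.IsSymm) (hA₀ : ∀ i j, 0 ≤ A i j) {x : V → ℝ} (hx : ∀ i, 0 < x i) {μ : ℝ}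
    (hAx : A *ᵥ x = μ • x) {w : V → ℝ} (hw : w ≠ 0) {ν : ℝ} (hAw : A *ᵥ w = ν • w) :
    ν ≤ μ := by
  set y : V → ℝ := fun i => |w i|
  have hy : 0 ≤ y := fun i => abs_nonneg (w i)
  have hAy : |ν| • y ≤ A *ᵥ y := fun i => by
    calc |ν| * |w i| = |(A *ᵥ w) i| := by simp [hAw, abs_mul]
      _ ≤ ∑ j, |A i j * w j| := Finset.abs_sum_le_sum_abs _ _
      _ = (A *ᵥ y) i := by
        simp [Matrix.mulVec, dotProduct, abs_mul, abs_of_nonneg (hA₀ i _), y]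
  have hxy : 0 < x ⬝ᵥ y := by
    obtain ⟨i, hi⟩ := Function.ne_iff.1 hw
    exact Finset.sum_pos' (fun j _ => mul_nonneg (hx j).le (hy j))
      ⟨i, mem_univ _, mul_pos (hx i) (abs_pos.2 hi)⟩
  have key : |ν| * (x ⬝ᵥ y) ≤ μ * (x ⬝ᵥ y) :=
    calc |ν| * (x ⬝ᵥ y) = x ⬝ᵥ (|ν| • y) := by rw [dotProduct_smul, smul_eq_mul]
      _ ≤ x ⬝ᵥ (A *ᵥ y) := dotProduct_le_dotProduct_of_nonneg_left hAy fun i => (hx i).le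
      _ = (A *ᵥ x) ⬝ᵥ y := by rw [Matrix.dotProduct_mulVec, ← Matrix.mulVec_transpose, hA.eq]
      _ = μ * (x ⬝ᵥ y) := by rw [hAx, smul_dotProduct, smul_eq_mul]
  exact (le_abs_self ν).trans (le_of_mul_le_mul_right key hxy)

theorem distMatrix_isSymm {V : Type*} [Fintype V] (G : SimpleGraph V) :
    (distMatrix G).IsSymm :=
  Matrix.IsSymm.ext fun i j => by simp [distMatrix, SimpleGraph.dist_comm]

theorem distSpecRad_eq_of_pos_eigenvector {V : Type*} [Fintype V] [Nonempty V]
    (G : SimpleGraph V) {x : V → ℝ} (hx : ∀ v, 0 < x v) {μ : ℝ}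
    (hGx : distMatrix G *ᵥ x = μ • x) : distSpecRad G = μ :=
  IsGreatest.csSup_eq ⟨⟨x, fun h => (hx (Classical.arbitrary V)).ne' (congrFun h _), hGx⟩,
    fun _ ⟨_, hw, hGw⟩ => Matrix.le_of_mulVec_eq_smul_of_pos (distMatrix_isSymm G)
      (fun _ _ => Nat.cast_nonneg _) hx hGx hw hGw⟩

theorem SimpleGraph.dist_eq_two_of_adj_of_adj {V : Type*} {G : SimpleGraph V} {u v w : V}
    (huv : u ≠ v) (h : ¬ G.Adj u v) (hu : G.Adj u w) (hv : G.Adj v w) : G.dist u v = 2 := by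
  rw [SimpleGraph.dist, SimpleGraph.edist_eq_two_iff.2 ⟨huv, h, w, hu, hv⟩]
  rfl

section GraphJoin

variable {α β : Type*} {G : SimpleGraph α} {H : SimpleGraph β}

theorem dist_graphJoin_inr_inr_of_not_adj [Nonempty α] {b b' : β} (hne : b ≠ b')
    (h : ¬ H.Adj b b') : (graphJoin G H).dist (.inr b) (.inr b') = 2 :=
  SimpleGraph.dist_eq_two_of_adj_of_adj (by simpa using hne) h
    (w := .inl (Classical.arbitrary α)) trivial trivial

variable [Fintype α] [Fintype β]

theorem distMatrix_graphJoin_inl_inr (a : α) (b : β) :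
    distMatrix (graphJoin G H) (.inl a) (.inr b) = 1 := by
  have : (graphJoin G H).dist (.inl a) (.inr b) = 1 := SimpleGraph.dist_eq_one_iff_adj.2 trivial
  simp [distMatrix, this]

theorem distMatrix_graphJoin_inr_inl (b : β) (a : α) :
    distMatrix (graphJoin G H) (.inr b) (.inl a) = 1 := by
  have : (graphJoin G H).dist (.inr b) (.inl a) = 1 := SimpleGraph.dist_eq_one_iff_adj.2 trivial
  simp [distMatrix, this]

theorem distMatrix_graphJoin_top_inl_inl [DecidableEq α] (a a' : α) :
    distMatrix (graphJoin ⊤ H) (.inl a) (.inl a') = if a = a' then 0 else 1 := by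
  split_ifs with h
  · simp [distMatrix, h]
  · have : (graphJoin ⊤ H).dist (.inl a) (.inl a') = 1 :=
      SimpleGraph.dist_eq_one_iff_adj.2 ((top_adj a a').2 h)
    simp [distMatrix, this]

theorem distMatrix_graphJoin_top_inr_inr {ι : Type*} [DecidableEq β] [DecidableEq ι]
    [Nonempty α] {κ : β → ι} (hH : ∀ y y', H.Adj y y' ↔ y ≠ y' ∧ κ y = κ y') (y y' : β) :
    distMatrix (graphJoin (⊤ : SimpleGraph α) H) (.inr y) (.inr y') =
      if y = y' then 0 else if κ y = κ y' then 1 else 2 := by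
  split_ifs with h h'
  · simp [distMatrix, h]
  · have : (graphJoin (⊤ : SimpleGraph α) H).dist (.inr y) (.inr y') = 1 :=
      SimpleGraph.dist_eq_one_iff_adj.2 ((hH y y').2 ⟨h, h'⟩)
    simp [distMatrix, this]
  · simp [distMatrix, dist_graphJoin_inr_inr_of_not_adj h fun hadj => h' ((hH y y').1 hadj).2]

end GraphJoin

section Secular

variable {ι : Type*} [Fintype ι]

noncomputable def cliqueTerm (t x : ℝ) : ℝ := x / (t + x + 1)

noncomputable def cliqueSum (k : ι → ℕ) (t : ℝ) : ℝ := ∑ i, cliqueTerm t (k i)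

noncomputable def joinSecular (s : ℕ) (k : ι → ℕ) (t : ℝ) : ℝ :=
  cliqueSum k t * (2 + s / (t - s + 1))

theorem cliqueTerm_le_cliqueTerm {x t t' : ℝ} (hx : 0 ≤ x) (ht : -1 < t) (htt' : t ≤ t') :
    cliqueTerm t' x ≤ cliqueTerm t x :=
  div_le_div_of_nonneg_left hx (by linarith) (by linarith)

theorem cliqueTerm_lt_cliqueTerm {x t t' : ℝ} (hx : 0 < x) (ht : -1 < t) (htt' : t < t') :
    cliqueTerm t' x < cliqueTerm t x :=
  div_lt_div_of_pos_left hx (by linarith) (by linarith)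

theorem cliqueSum_pos {k : ι → ℕ} (hk : ∃ i, 0 < k i) {t : ℝ} (ht : -1 < t) :
    0 < cliqueSum k t := by
  obtain ⟨i, hi⟩ := hk
  refine Finset.sum_pos' (fun j _ => div_nonneg (Nat.cast_nonneg _) ?_) ⟨i, mem_univ _, ?_⟩
  · linarith [(Nat.cast_nonneg (k j) : (0 : ℝ) ≤ k j)]
  · have : (0 : ℝ) < k i := by exact_mod_cast hi
    exact div_pos this (by linarith)

theorem cliqueSum_strictAntiOn {k : ι → ℕ} (hk : ∃ i, 0 < k i) :
    StrictAntiOn (cliqueSum k) (Set.Ioi (-1)) := by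
  intro t ht t' _ htt'
  obtain ⟨i, hi⟩ := hk
  exact Finset.sum_lt_sum (fun j _ => cliqueTerm_le_cliqueTerm (Nat.cast_nonneg _) ht htt'.le)
    ⟨i, mem_univ _, cliqueTerm_lt_cliqueTerm (by exact_mod_cast hi) ht htt'⟩

theorem joinSecular_strictAntiOn (s : ℕ) {k : ι → ℕ} (hk : ∃ i, 0 < k i) :
    StrictAntiOn (joinSecular s k) (Set.Ioi ((s : ℝ) - 1)) := by
  intro t ht t' ht' htt'
  have hs : (0 : ℝ) ≤ s := Nat.cast_nonneg s
  simp only [Set.mem_Ioi] at ht ht'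
  have ht₁ : -1 < t := by linarith
  have hd : 0 < t' - s + 1 := by linarith
  have hfactor : 2 + s / (t' - s + 1) ≤ 2 + s / (t - s + 1) := by
    gcongr
    · linarith
  exact mul_lt_mul (cliqueSum_strictAntiOn hk ht₁ (by simp; linarith) htt') hfactor
    (by positivity) (cliqueSum_pos hk ht₁).le

theorem continuousOn_joinSecular (s : ℕ) (k : ι → ℕ) :
    ContinuousOn (joinSecular s k) (Set.Ioi ((s : ℝ) - 1)) := by
  have hs : (0 : ℝ) ≤ s := Nat.cast_nonneg s
  refine .mul (continuousOn_finsetSum _ fun i _ => ?_) (.add continuousOn_const ?_)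
  · refine continuousOn_const.div (by fun_prop) fun t (ht : _ < t) => ?_
    have := Nat.cast_nonneg (α := ℝ) (k i)
    exact (by linarith : (0 : ℝ) < t + k i + 1).ne'
  · exact continuousOn_const.div (by fun_prop) fun t (ht : _ < t) =>
      (by linarith : (0 : ℝ) < t - s + 1).ne'

theorem exists_one_le_joinSecular {s : ℕ} (hs : 0 < s) {k : ι → ℕ} (hk : ∃ i, 0 < k i) :
    ∃ t, (s : ℝ) - 1 < t ∧ t ≤ s ∧ 1 ≤ joinSecular s k t := by
  have hs₁ : (1 : ℝ) ≤ s := by exact_mod_cast hs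
  have hf := cliqueSum_pos hk (t := s) (by linarith)
  set ε := min 1 (s * cliqueSum k s)
  have hε : 0 < ε := lt_min one_pos (by positivity)
  have hε₁ : ε ≤ 1 := min_le_left _ _
  refine ⟨s - 1 + ε, by linarith, by linarith, ?_⟩
  have hmono : cliqueSum k s ≤ cliqueSum k (s - 1 + ε) :=
    (cliqueSum_strictAntiOn hk).antitoneOn (by simp; linarith) (by simp; linarith) (by linarith)
  calc 1 ≤ cliqueSum k s * s / ε := by
        rw [le_div_iff₀ hε]; linarith [min_le_right 1 (s * cliqueSum k s)]
    _ ≤ cliqueSum k (s - 1 + ε) * (2 + s / (s - 1 + ε - s + 1)) := by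
        rw [mul_div_assoc, show (s : ℝ) - 1 + ε - s + 1 = ε by ring]
        gcongr
        · exact hf.le.trans hmono
        · linarith

theorem exists_joinSecular_le_one (s : ℕ) {k : ι → ℕ} (hk : ∃ i, 0 < k i) :
    ∃ t, (s : ℝ) ≤ t ∧ joinSecular s k t ≤ 1 := by
  set K : ℝ := ∑ i, (k i : ℝ)
  have hK : 0 ≤ K * (s + 2) := by positivity
  refine ⟨K * (s + 2) + s, by linarith, ?_⟩
  set t := K * (s + 2) + s
  have hsum : cliqueSum k t ≤ K / (t + 1) := by
    rw [cliqueSum, Finset.sum_div]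
    exact Finset.sum_le_sum fun i _ =>
      div_le_div_of_nonneg_left (Nat.cast_nonneg _) (by positivity) (by simp)
  have hd : 1 ≤ t - s + 1 := by linarith
  have hfactor : 2 + s / (t - s + 1) ≤ s + 2 := by
    linarith [div_le_self (Nat.cast_nonneg s) hd]
  calc joinSecular s k t ≤ K / (t + 1) * (s + 2) :=
        mul_le_mul hsum hfactor (by positivity) ((cliqueSum_pos hk (by linarith)).le.trans hsum)
    _ ≤ 1 := by rw [div_mul_eq_mul_div, div_le_one (by positivity)]; linarith

theorem exists_joinSecular_eq_one {s : ℕ} (hs : 0 < s) {k : ι → ℕ} (hk : ∃ i, 0 < k i) :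
    ∃ t, (s : ℝ) - 1 < t ∧ joinSecular s k t = 1 := by
  obtain ⟨lo, hlo, hlos, hΨlo⟩ := exists_one_le_joinSecular hs hk
  obtain ⟨hi, hshi, hΨhi⟩ := exists_joinSecular_le_one s hk
  obtain ⟨t, ht, hroot⟩ := intermediate_value_Icc' (hlos.trans hshi)
    ((continuousOn_joinSecular s k).mono fun t ht => hlo.trans_le ht.1) ⟨hΨhi, hΨlo⟩
  exact ⟨t, hlo.trans_le ht.1, hroot⟩

end Secular

section Roots

variable {ι ι' : Type*} [Fintype ι] [Fintype ι'] {s : ℕ} {k : ι → ℕ} {k' : ι' → ℕ}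
  {t t' : ℝ}

theorem lt_iff_cliqueSum_lt_of_joinSecular_eq_one (hk' : ∃ i, 0 < k' i)
    (ht : (s : ℝ) - 1 < t) (ht' : (s : ℝ) - 1 < t')
    (hroot : joinSecular s k t = 1) (hroot' : joinSecular s k' t' = 1) :
    t' < t ↔ cliqueSum k' t < cliqueSum k t := by
  have hd : 0 < t - s + 1 := by linarith
  rw [← (joinSecular_strictAntiOn s hk').lt_iff_gt ht ht', hroot', ← hroot, joinSecular,
    joinSecular, mul_lt_mul_iff_of_pos_right (by positivity)]

theorem le_iff_cliqueSum_le_of_joinSecular_eq_one (hk' : ∃ i, 0 < k' i)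
    (ht : (s : ℝ) - 1 < t) (ht' : (s : ℝ) - 1 < t')
    (hroot : joinSecular s k t = 1) (hroot' : joinSecular s k' t' = 1) :
    t' ≤ t ↔ cliqueSum k' t ≤ cliqueSum k t := by
  have hd : 0 < t - s + 1 := by linarith
  rw [← (joinSecular_strictAntiOn s hk').le_iff_ge ht ht', hroot', ← hroot, joinSecular,
    joinSecular, mul_le_mul_iff_of_pos_right (by positivity)]

end Roots

section Concavity

theorem cliqueTerm_add_add_sub {t p a b : ℝ} (htp : -1 < t + p) (ha : 0 ≤ a) (hb : 0 ≤ b) :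
    cliqueTerm t (p + a) + cliqueTerm t (p + b) - (cliqueTerm t (p + a + b) + cliqueTerm t p) =
      (t + 1) * a * b * (2 * (t + 1 + p) + a + b) /
        ((t + 1 + p) * (t + 1 + p + a) * (t + 1 + p + b) * (t + 1 + p + a + b)) := by
  have h₀ : t + p + 1 ≠ 0 := by linarith
  have h₁ : t + (p + a) + 1 ≠ 0 := by linarith
  have h₂ : t + (p + b) + 1 ≠ 0 := by linarith
  have h₃ : t + (p + a + b) + 1 ≠ 0 := by linarith
  have h₁' : t + 1 + p + a ≠ 0 := by linarith
  have h₂' : t + 1 + p + b ≠ 0 := by linarith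
  have h₃' : t + 1 + p + a + b ≠ 0 := by linarith
  have h₀' : t + 1 + p ≠ 0 := by linarith
  unfold cliqueTerm
  field_simp
  ring

theorem cliqueTerm_add_sub_add_le {t p x y : ℝ} (ht : -1 < t) (hp : 0 ≤ p) (hx : p ≤ x)
    (hy : p ≤ y) :
    cliqueTerm t (x + (y - p)) + cliqueTerm t p ≤ cliqueTerm t x + cliqueTerm t y := by
  obtain ⟨a, ha, rfl⟩ : ∃ a, 0 ≤ a ∧ x = p + a := ⟨x - p, by linarith, by ring⟩
  obtain ⟨b, hb, rfl⟩ : ∃ b, 0 ≤ b ∧ y = p + b := ⟨y - p, by linarith, by ring⟩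
  have ht₁ : 0 < t + 1 := by linarith
  have hv : 0 < t + 1 + p := by linarith
  rw [← sub_nonneg, add_sub_cancel_left, cliqueTerm_add_add_sub (by linarith) ha hb]
  positivity

theorem cliqueTerm_add_sub_add_lt {t p x y : ℝ} (ht : -1 < t) (hp : 0 ≤ p) (hx : p < x)
    (hy : p < y) :
    cliqueTerm t (x + (y - p)) + cliqueTerm t p < cliqueTerm t x + cliqueTerm t y := by
  obtain ⟨a, ha, rfl⟩ : ∃ a, 0 < a ∧ x = p + a := ⟨x - p, by linarith, by ring⟩
  obtain ⟨b, hb, rfl⟩ : ∃ b, 0 < b ∧ y = p + b := ⟨y - p, by linarith, by ring⟩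
  have ht₁ : 0 < t + 1 := by linarith
  have hv : 0 < t + 1 + p := by linarith
  rw [← sub_pos, add_sub_cancel_left, cliqueTerm_add_add_sub (by linarith) ha.le hb.le]
  positivity

variable {ι : Type*} {t p : ℝ} {y : ι → ℝ}

theorem cliqueTerm_add_sum_le (S : Finset ι) (ht : -1 < t) (hp : 0 ≤ p) {x : ℝ} (hx : p ≤ x)
    (hy : ∀ i ∈ S, p ≤ y i) :
    cliqueTerm t (x + ∑ i ∈ S, (y i - p)) + #S * cliqueTerm t p ≤
      cliqueTerm t x + ∑ i ∈ S, cliqueTerm t (y i) := by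
  classical
  induction S using Finset.induction_on generalizing x with
  | empty => simp
  | insert j S hj ih =>
    rw [Finset.forall_mem_insert] at hy
    have ih' := ih (x := x + (y j - p)) (by linarith [hy.1]) hy.2
    have htwo := cliqueTerm_add_sub_add_le ht hp hx hy.1
    rw [sum_insert hj, sum_insert hj, card_insert_of_notMem hj, ← add_assoc]
    push_cast
    linarith

theorem cliqueTerm_add_sum_lt_iff [DecidableEq ι] (S : Finset ι) (ht : -1 < t) (hp : 0 ≤ p)
    {x : ℝ} (hx : p < x) (hy : ∀ i ∈ S, p ≤ y i) :
    cliqueTerm t (x + ∑ i ∈ S, (y i - p)) + #S * cliqueTerm t p <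
      cliqueTerm t x + ∑ i ∈ S, cliqueTerm t (y i) ↔ ∃ i ∈ S, p < y i := by
  constructor
  · contrapose!
    intro hle
    have hyp : ∀ i ∈ S, y i = p := fun i hi => le_antisymm (hle i hi) (hy i hi)
    have hsum : ∑ i ∈ S, cliqueTerm t (y i) = #S * cliqueTerm t p := by
      simp [sum_congr rfl fun i hi => congrArg (cliqueTerm t) (hyp i hi)]
    simp [sum_congr rfl hyp, hsum]
  · rintro ⟨j, hj, hyj⟩
    rw [← insert_erase hj] at hy ⊢
    rw [Finset.forall_mem_insert] at hy
    have hrest :=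
      cliqueTerm_add_sum_le (S.erase j) ht hp (x := x + (y j - p)) (by linarith) hy.2
    have htwo := cliqueTerm_add_sub_add_lt ht hp hx hyj
    rw [sum_insert (notMem_erase j S), sum_insert (notMem_erase j S),
      card_insert_of_notMem (notMem_erase j S), ← add_assoc]
    push_cast
    linarith

end Concavity

section Extremal

variable {c N p : ℕ} {m : Fin (c + 1) → ℕ}

theorem cliqueSum_option_elim (t : ℝ) :
    cliqueSum (fun o : Option (Fin c) => o.elim N fun _ => p) t =
      cliqueTerm t N + c * cliqueTerm t p := by
  simp [cliqueSum, Fintype.sum_option]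

theorem natCast_eq_add_sum_sub (hN : N + c * p = ∑ i, m i) :
    (N : ℝ) = m 0 + ∑ j : Fin c, ((m j.succ : ℝ) - p) := by
  rw [Fin.sum_univ_succ] at hN
  have hN' : (N : ℝ) + c * p = m 0 + ∑ j : Fin c, (m j.succ : ℝ) := by exact_mod_cast hN
  rw [Finset.sum_sub_distrib]
  simp
  linarith

theorem cliqueSum_option_elim_le (hm : ∀ i, p ≤ m i) (hN : N + c * p = ∑ i, m i) {t : ℝ}
    (ht : -1 < t) :
    cliqueSum (fun o : Option (Fin c) => o.elim N fun _ => p) t ≤ cliqueSum m t := by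
  rw [cliqueSum_option_elim, cliqueSum, Fin.sum_univ_succ, natCast_eq_add_sum_sub hN]
  simpa using cliqueTerm_add_sum_le univ ht (Nat.cast_nonneg p) (x := m 0)
    (y := fun j : Fin c => (m j.succ : ℝ)) (by exact_mod_cast hm 0)
    fun j _ => by exact_mod_cast hm j.succ

theorem cliqueSum_option_elim_lt_iff (hm : ∀ i, p ≤ m i) (hm₀ : p < m 0)
    (hN : N + c * p = ∑ i, m i) {t : ℝ} (ht : -1 < t) :
    cliqueSum (fun o : Option (Fin c) => o.elim N fun _ => p) t < cliqueSum m t ↔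
      ∃ j : Fin c, p < m j.succ := by
  rw [cliqueSum_option_elim, cliqueSum, Fin.sum_univ_succ, natCast_eq_add_sum_sub hN]
  simpa using cliqueTerm_add_sum_lt_iff univ ht (Nat.cast_nonneg p) (x := m 0)
    (y := fun j : Fin c => (m j.succ : ℝ)) (by exact_mod_cast hm₀)
    fun j _ => by exact_mod_cast hm j.succ

theorem eq_and_forall_ne_zero_eq_iff_not_exists_lt (hm : ∀ i, p ≤ m i)
    (hN : N + c * p = ∑ i, m i) :
    (m 0 = N ∧ ∀ i, i ≠ 0 → m i = p) ↔ ¬ ∃ j : Fin c, p < m j.succ := by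
  simp only [not_exists, not_lt]
  refine ⟨fun h j => (h.2 _ (Fin.succ_ne_zero j)).le, fun h => ?_⟩
  have hsucc : ∀ j : Fin c, m j.succ = p := fun j => le_antisymm (h j) (hm _)
  refine ⟨?_, fun i hi => ?_⟩
  · simp [Fin.sum_univ_succ, hsucc] at hN
    omega
  · obtain ⟨j, rfl⟩ := Fin.exists_succ_eq.2 hi
    exact hsucc j

end Extremal

section CliqueJoinSpectrum

variable {α β ι : Type*} [Fintype α] [Fintype β] [Fintype ι] [DecidableEq ι]
  {H : SimpleGraph β} {κ : β → ι} {k : ι → ℕ}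

theorem sum_comp_eq_sum_mul_of_card_fiber (hk : ∀ i, #{y | κ y = i} = k i) (h : ι → ℝ) :
    ∑ y, h (κ y) = ∑ i, (k i : ℝ) * h i := by
  simp [← Finset.sum_fiberwise' univ κ h, hk]

theorem distMatrix_graphJoin_top_mulVec_inl (hk : ∀ i, #{y | κ y = i} = k i) (a : ℝ)
    (b : ι → ℝ) (a₀ : α) :
    (distMatrix (graphJoin ⊤ H) *ᵥ Sum.elim (fun _ => a) (b ∘ κ)) (.inl a₀) =
      (Fintype.card α - 1) * a + ∑ i, k i * b i := by
  classical
  have hrow : ∀ x, (if a₀ = x then 0 else a) = a - if a₀ = x then a else 0 := by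
    intro x; split_ifs <;> ring
  simp [mulVec, dotProduct, Fintype.sum_sum_type, distMatrix_graphJoin_top_inl_inl,
    distMatrix_graphJoin_inl_inr, sum_comp_eq_sum_mul_of_card_fiber hk]
  simp only [hrow, Finset.sum_sub_distrib, Finset.sum_const, card_univ, Finset.sum_ite_eq,
    mem_univ, if_true, nsmul_eq_mul]
  ring

theorem distMatrix_graphJoin_top_mulVec_inr [Nonempty α]
    (hH : ∀ y y', H.Adj y y' ↔ y ≠ y' ∧ κ y = κ y') (hk : ∀ i, #{y | κ y = i} = k i) (a : ℝ)
    (b : ι → ℝ) (y₀ : β) :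
    (distMatrix (graphJoin (⊤ : SimpleGraph α) H) *ᵥ Sum.elim (fun _ => a) (b ∘ κ)) (.inr y₀) =
      Fintype.card α * a + 2 * ∑ i, k i * b i - (k (κ y₀) + 1) * b (κ y₀) := by
  classical
  have hrow : ∀ y, (if y₀ = y then 0 else if κ y₀ = κ y then b (κ y) else 2 * b (κ y)) =
      2 * b (κ y) - (if κ y₀ = κ y then b (κ y) else 0) - (if y₀ = y then b (κ y₀) else 0) := by
    intro y
    split_ifs <;> simp_all <;> ring
  have hclique : ∑ y, (if κ y₀ = κ y then b (κ y) else 0) = k (κ y₀) * b (κ y₀) := by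
    rw [sum_comp_eq_sum_mul_of_card_fiber hk (fun i => if κ y₀ = i then b i else 0)]; simp
  simp [mulVec, dotProduct, Fintype.sum_sum_type, distMatrix_graphJoin_top_inr_inr hH,
    distMatrix_graphJoin_inr_inl]
  simp only [hrow, Finset.sum_sub_distrib, ← Finset.mul_sum,
    sum_comp_eq_sum_mul_of_card_fiber hk, hclique, Finset.sum_ite_eq, mem_univ, if_true]
  ring

theorem joinSecular_distSpecRad_graphJoin_top [Nonempty α]
    (hH : ∀ y y', H.Adj y y' ↔ y ≠ y' ∧ κ y = κ y')
    (hk : ∀ i, #{y | κ y = i} = k i) (hk₀ : ∃ i, 0 < k i) :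
    (Fintype.card α : ℝ) - 1 < distSpecRad (graphJoin (⊤ : SimpleGraph α) H) ∧
      joinSecular (Fintype.card α) k (distSpecRad (graphJoin (⊤ : SimpleGraph α) H)) = 1 := by
  obtain ⟨t, ht, hroot⟩ := exists_joinSecular_eq_one (Fintype.card_pos (α := α)) hk₀
  suffices distSpecRad (graphJoin (⊤ : SimpleGraph α) H) = t by rw [this]; exact ⟨ht, hroot⟩
  have hd : 0 < t - Fintype.card α + 1 := by linarith
  have hdk : ∀ i, 0 < t + k i + 1 := fun i => by
    have := Nat.cast_nonneg (α := ℝ) (k i)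
    linarith
  set b : ι → ℝ := fun i => 1 / (t + k i + 1)
  have hf : ∑ i, k i * b i = cliqueSum k t := sum_congr rfl fun i _ => mul_one_div _ _
  set a := cliqueSum k t / (t - Fintype.card α + 1)
  have ha : (t - Fintype.card α + 1) * a = cliqueSum k t := mul_div_cancel₀ _ hd.ne'
  have hsa : Fintype.card α * a + 2 * cliqueSum k t = 1 := by
    rw [← hroot, joinSecular, ← ha]
    field_simp
    ring
  apply distSpecRad_eq_of_pos_eigenvector _ (x := Sum.elim (fun _ => a) (b ∘ κ))
  · rintro (_ | y)
    · exact div_pos (cliqueSum_pos hk₀ (by linarith)) hd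
    · exact one_div_pos.2 (hdk _)
  · ext (a₀ | y₀)
    · rw [distMatrix_graphJoin_top_mulVec_inl hk, hf]
      simp only [Pi.smul_apply, Sum.elim_inl, smul_eq_mul]
      linear_combination -ha
    · rw [distMatrix_graphJoin_top_mulVec_inr hH hk, hf]
      have hb : (t + k (κ y₀) + 1) * b (κ y₀) = 1 := mul_one_div_cancel (hdk _).ne'
      simp only [Pi.smul_apply, Sum.elim_inr, Function.comp_apply, smul_eq_mul]
      linear_combination hsa - hb

end CliqueJoinSpectrum

section Graphs

variable {s : ℕ}

theorem joinSecular_distSpecRad_cliquesGraph (hs : 0 < s) {c : ℕ} {m : Fin c → ℕ}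
    (hm : ∃ i, 0 < m i) :
    (s : ℝ) - 1 < distSpecRad (graphJoin (⊤ : SimpleGraph (Fin s)) (cliquesGraph m)) ∧
      joinSecular s m
        (distSpecRad (graphJoin (⊤ : SimpleGraph (Fin s)) (cliquesGraph m))) = 1 := by
  have : Nonempty (Fin s) := Fin.pos_iff_nonempty.1 hs
  simpa using joinSecular_distSpecRad_graphJoin_top (α := Fin s) (H := cliquesGraph m)
    (κ := Sigma.fst) (fun _ _ => and_comm) (fun i => by
      rw [Finset.card_filter, ← univ_sigma_univ, sum_sigma]; simp [apply_ite Finset.card]) hm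

theorem joinSecular_distSpecRad_graphSum_repK (hs : 0 < s) {N c p : ℕ} (hN : 0 < N) :
    (s : ℝ) - 1 < distSpecRad (graphJoin (⊤ : SimpleGraph (Fin s))
        (graphSum (⊤ : SimpleGraph (Fin N)) (repK c p))) ∧
      joinSecular s (fun o : Option (Fin c) => o.elim N fun _ => p)
        (distSpecRad (graphJoin (⊤ : SimpleGraph (Fin s))
          (graphSum (⊤ : SimpleGraph (Fin N)) (repK c p)))) = 1 := by
  have : Nonempty (Fin s) := Fin.pos_iff_nonempty.1 hs
  simpa using joinSecular_distSpecRad_graphJoin_top (α := Fin s)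
    (H := graphSum (⊤ : SimpleGraph (Fin N)) (repK c p))
    (κ := Sum.elim (fun _ => none) (fun q => some q.1))
    (k := fun o : Option (Fin c) => o.elim N fun _ => p)
    (by rintro (x | q) (y | q') <;> simp [graphSum, repK, and_comm])
    (fun o => by
      rw [Finset.card_filter]
      simp only [Fintype.sum_sum_type, Fintype.sum_prod_type]
      cases o <;> simp)
    ⟨none, hN⟩

end Graphs

theorem stmt3_general (n c s p : ℕ) (hc : 0 < c) (hs : 0 < s) (hp : 0 < p)
    (m : Fin c → ℕ)
    (hfirst : 2 * p ≤ m ⟨0, hc⟩) (hlow : ∀ i, p ≤ m i)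
    (hsum : s + ∑ i, m i = n) :
    distSpecRad (graphJoin (⊤ : SimpleGraph (Fin s))
        (graphSum (⊤ : SimpleGraph (Fin (n - s - p * (c - 1)))) (repK (c - 1) p)))
      ≤ distSpecRad (graphJoin (⊤ : SimpleGraph (Fin s)) (cliquesGraph m)) ∧
    (distSpecRad (graphJoin (⊤ : SimpleGraph (Fin s)) (cliquesGraph m)) =
        distSpecRad (graphJoin (⊤ : SimpleGraph (Fin s))
          (graphSum (⊤ : SimpleGraph (Fin (n - s - p * (c - 1)))) (repK (c - 1) p)))
      ↔ m ⟨0, hc⟩ = n - s - p * (c - 1) ∧ ∀ i : Fin c, i ≠ ⟨0, hc⟩ → m i = p) := by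
  obtain ⟨c, rfl⟩ : ∃ c', c = c' + 1 := ⟨c - 1, by omega⟩
  change 2 * p ≤ m 0 at hfirst
  change _ ∧ (_ ↔ m 0 = n - s - p * c ∧ ∀ i, i ≠ 0 → m i = p)
  set N := n - s - p * c
  have hsplit : ∑ i, m i = m 0 + ∑ j : Fin c, m j.succ := Fin.sum_univ_succ m
  have hlow' : c * p ≤ ∑ j : Fin c, m j.succ := by
    simpa using Finset.sum_le_sum fun (j : Fin c) (_ : j ∈ univ) => hlow j.succ
  have hN : N + c * p = ∑ i, m i := by
    have := Nat.mul_comm p c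
    omega
  have hm₀ : p < m 0 := by omega
  have hN₀ : 0 < N := by omega
  obtain ⟨hρ, hroot⟩ := joinSecular_distSpecRad_cliquesGraph hs ⟨0, hp.trans hm₀⟩
  obtain ⟨hρ', hroot'⟩ :=
    joinSecular_distSpecRad_graphSum_repK hs (c := c) (p := p) (N := N) hN₀
  have hρ₁ : -1 < distSpecRad (graphJoin (⊤ : SimpleGraph (Fin s)) (cliquesGraph m)) := by
    linarith
  have hle := (le_iff_cliqueSum_le_of_joinSecular_eq_one ⟨none, hN₀⟩ hρ hρ' hroot hroot').2
    (cliqueSum_option_elim_le hlow hN hρ₁)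
  refine ⟨hle, ?_⟩
  rw [eq_and_forall_ne_zero_eq_iff_not_exists_lt hlow hN,
    ← cliqueSum_option_elim_lt_iff hlow hm₀ hN hρ₁,
    ← lt_iff_cliqueSum_lt_of_joinSecular_eq_one ⟨none, hN₀⟩ hρ hρ' hroot hroot', not_lt]
  exact ⟨Eq.le, (le_antisymm · hle)⟩

theorem stmt3 (n c s p : ℕ) (hn : 0 < n) (hc : 0 < c) (hs : 0 < s) (hp : 0 < p)
    (m : Fin c → ℕ) (hanti : Antitone m)
    (hfirst : 2 * p ≤ m ⟨0, hc⟩) (hlow : ∀ i, p ≤ m i)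
    (hsum : s + ∑ i, m i = n) :
    distSpecRad (graphJoin (⊤ : SimpleGraph (Fin s))
        (graphSum (⊤ : SimpleGraph (Fin (n - s - p * (c - 1)))) (repK (c - 1) p)))
      ≤ distSpecRad (graphJoin (⊤ : SimpleGraph (Fin s)) (cliquesGraph m)) ∧
    (distSpecRad (graphJoin (⊤ : SimpleGraph (Fin s)) (cliquesGraph m)) =
        distSpecRad (graphJoin (⊤ : SimpleGraph (Fin s))
          (graphSum (⊤ : SimpleGraph (Fin (n - s - p * (c - 1)))) (repK (c - 1) p)))
      ↔ m ⟨0, hc⟩ = n - s - p * (c - 1) ∧ ∀ i : Fin c, i ≠ ⟨0, hc⟩ → m i = p) :=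
  stmt3_general n c s p hc hs hp m hfirst hlow hsum
end

section
/- Let δ ≥ 2 be an integer and n ≥ 8δ. Then λ₁(D(K_δ ∨ (K_{n−2δ} + δK₁))) > n + δ. -/
open SimpleGraph Finset

/-!
The distance spectral radius of a graph bounds the Rayleigh quotient of its
(symmetric) distance matrix at every nonzero vector. The graph has diameter 2, so its distance
matrix is explicit, and at the vector equal to 1 on the two cliques and 2 on the isolated vertices
the Rayleigh quotient is `(m² + 10mδ + 13δ² - m - 9δ) / (m + 5δ)` with `m = n - 2δ`; this exceeds
`n + δ = m + 3δ` as soon as `m ≥ 6δ` and `δ ≥ 2`.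
-/

open Matrix WithLp Module.End

lemma Matrix.IsHermitian.dotProduct_mulVec_div_le_sSup {V : Type*} [Fintype V]
    {A : Matrix V V ℝ} (hA : A.IsHermitian) {x : V → ℝ} (hx : x ≠ 0) :
    (x ⬝ᵥ A *ᵥ x) / (x ⬝ᵥ x) ≤ sSup {μ : ℝ | ∃ v : V → ℝ, v ≠ 0 ∧ A *ᵥ v = μ • v} := by
  classical
  set S := {μ : ℝ | ∃ v : V → ℝ, v ≠ 0 ∧ A *ᵥ v = μ • v}
  have hS : BddAbove S := by
    refine ((finite_hasEigenvalue (toLin' A)).subset ?_).bddAbove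
    rintro μ ⟨v, hv, hAv⟩
    exact hasEigenvalue_of_hasEigenvector ⟨mem_eigenspace_iff.2 (by simpa using hAv), hv⟩
  set T := toEuclideanLin A
  have hT : T.IsSymmetric := isSymmetric_toEuclideanLin_iff.2 hA
  set T' := LinearMap.toContinuousLinearMap T
  have : Nontrivial (EuclideanSpace ℝ V) := ⟨⟨toLp 2 x, 0, by simpa using hx⟩⟩
  obtain ⟨v, hv⟩ := hT.hasEigenvalue_iSup_of_finiteDimensional.exists_hasEigenvector
  have hmem : (⨆ y : {y : EuclideanSpace ℝ V // y ≠ 0}, T'.rayleighQuotient y) ∈ S :=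
    ⟨ofLp v, by simpa using hv.2, congrArg ofLp hv.apply_eq_smul⟩
  have hbdd : BddAbove (Set.range fun y : {y : EuclideanSpace ℝ V // y ≠ 0} ↦
      T'.rayleighQuotient y) :=
    ⟨‖T'‖, by rintro _ ⟨y, rfl⟩; exact (le_abs_self _).trans (T'.rayleighQuotient_le_norm y)⟩
  calc (x ⬝ᵥ A *ᵥ x) / (x ⬝ᵥ x) = T'.rayleighQuotient (toLp 2 x) := by
        change _ = RCLike.re (inner ℝ (T (toLp 2 x)) (toLp 2 x)) / ‖toLp 2 x‖ ^ 2
        rw [← real_inner_self_eq_norm_sq, RCLike.re_to_real, toLpLin_toLp,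
          EuclideanSpace.inner_toLp_toLp, EuclideanSpace.inner_toLp_toLp, star_trivial,
          star_trivial, toLin'_apply, dotProduct_comm]
    _ ≤ _ := le_ciSup hbdd ⟨toLp 2 x, by simpa using hx⟩
    _ ≤ sSup S := le_csSup hS hmem

namespace SimpleGraph

variable {V : Type*} {G : SimpleGraph V}

lemma dist_eq_two_of_adj_of_adj_s9 {u v w : V} (huw : u ≠ w) (hnadj : ¬G.Adj u w)
    (huv : G.Adj u v) (hvw : G.Adj v w) : G.dist u w = 2 := by
  have hle : G.dist u w ≤ 2 := by simpa using dist_le (huv.toWalk.append hvw.toWalk)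
  have hne0 : G.dist u w ≠ 0 :=
    dist_ne_zero_iff_ne_and_reachable.2 ⟨huw, (huv.toWalk.append hvw.toWalk).reachable⟩
  have hne1 : G.dist u w ≠ 1 := fun h ↦ hnadj (dist_eq_one_iff_adj.1 h)
  omega

end SimpleGraph

section graphJoin

variable {α β : Type*} {G : SimpleGraph α} {H : SimpleGraph β}

@[simp] lemma graphJoin_adj_inl_inl {a a' : α} :
    (graphJoin G H).Adj (.inl a) (.inl a') ↔ G.Adj a a' := Iff.rfl
@[simp] lemma graphJoin_adj_inr_inr {b b' : β} :
    (graphJoin G H).Adj (.inr b) (.inr b') ↔ H.Adj b b' := Iff.rfl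
@[simp] lemma graphJoin_adj_inl_inr {a : α} {b : β} : (graphJoin G H).Adj (.inl a) (.inr b) :=
  trivial
@[simp] lemma graphJoin_adj_inr_inl {a : α} {b : β} : (graphJoin G H).Adj (.inr b) (.inl a) :=
  trivial

@[simp] lemma graphSum_adj_inl_inl {a a' : α} :
    (graphSum G H).Adj (.inl a) (.inl a') ↔ G.Adj a a' := Iff.rfl
@[simp] lemma graphSum_adj_inr_inr {b b' : β} :
    (graphSum G H).Adj (.inr b) (.inr b') ↔ H.Adj b b' := Iff.rfl
@[simp] lemma graphSum_not_adj_inl_inr {a : α} {b : β} : ¬(graphSum G H).Adj (.inl a) (.inr b) :=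
  id
@[simp] lemma graphSum_not_adj_inr_inl {a : α} {b : β} : ¬(graphSum G H).Adj (.inr b) (.inl a) :=
  id

open Classical in
lemma graphJoin_dist [Nonempty α] [Nonempty β] (u v : α ⊕ β) :
    (graphJoin G H).dist u v =
      if u = v then 0 else if (graphJoin G H).Adj u v then 1 else 2 := by
  split_ifs with heq hadj
  · simp [heq]
  · exact dist_eq_one_iff_adj.2 hadj
  · obtain ⟨a₀⟩ := ‹Nonempty α›
    obtain ⟨b₀⟩ := ‹Nonempty β›
    rcases u with a | b <;> rcases v with a' | b'
    · exact dist_eq_two_of_adj_of_adj_s9 heq hadj (graphJoin_adj_inl_inr (b := b₀))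
        graphJoin_adj_inr_inl
    · exact absurd trivial hadj
    · exact absurd trivial hadj
    · exact dist_eq_two_of_adj_of_adj_s9 heq hadj (graphJoin_adj_inr_inl (a := a₀))
        graphJoin_adj_inl_inr

end graphJoin

lemma Fintype.sum_ite_eq_zero_else {ι M : Type*} [Fintype ι] [DecidableEq ι] [AddCommGroup M]
    (i : ι) (c : M) : ∑ j, (if i = j then 0 else c) = Fintype.card ι • c - c := by
  have h : ∀ j, (if i = j then 0 else c) = c - if i = j then c else 0 := by
    intro j; split_ifs <;> simp
  simp [h, Finset.sum_sub_distrib]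

abbrev joinCliqueSumIsolated (k m l : ℕ) : SimpleGraph (Fin k ⊕ (Fin m ⊕ Fin l)) :=
  graphJoin ⊤ (graphSum ⊤ ⊥)

def testVector (k m l : ℕ) : Fin k ⊕ (Fin m ⊕ Fin l) → ℝ :=
  Sum.elim (fun _ ↦ 1) (Sum.elim (fun _ ↦ 1) (fun _ ↦ 2))

lemma distMatrix_joinCliqueSumIsolated_mulVec_testVector {k m l : ℕ} (hk : 0 < k)
    (hl : 0 < l) :
    distMatrix (joinCliqueSumIsolated k m l) *ᵥ testVector k m l =
      Sum.elim (fun _ ↦ (k + m + 2 * l - 1 : ℝ))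
        (Sum.elim (fun _ ↦ (k + m + 4 * l - 1 : ℝ)) (fun _ ↦ (k + 2 * m + 4 * l - 4 : ℝ))) := by
  have : Nonempty (Fin k) := ⟨⟨0, hk⟩⟩
  have : Nonempty (Fin l) := ⟨⟨0, hl⟩⟩
  ext (a | b | c) <;>
    simp +contextual [mulVec, dotProduct, Fintype.sum_sum_type, distMatrix, graphJoin_dist,
      joinCliqueSumIsolated, testVector, Fintype.sum_ite_eq_zero_else] <;>
    ring

lemma testVector_dotProduct_distMatrix_mulVec {k m l : ℕ} (hk : 0 < k) (hl : 0 < l) :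
    testVector k m l ⬝ᵥ distMatrix (joinCliqueSumIsolated k m l) *ᵥ testVector k m l =
      k * (k + m + 2 * l - 1) + m * (k + m + 4 * l - 1) + 2 * l * (k + 2 * m + 4 * l - 4) := by
  rw [distMatrix_joinCliqueSumIsolated_mulVec_testVector hk hl]
  simp [dotProduct, Fintype.sum_sum_type, testVector]
  ring

lemma testVector_dotProduct_self (k m l : ℕ) :
    testVector k m l ⬝ᵥ testVector k m l = k + m + 4 * l := by
  simp [dotProduct, Fintype.sum_sum_type, testVector]
  ring

lemma testVector_ne_zero {k : ℕ} (m l : ℕ) (hk : 0 < k) : testVector k m l ≠ 0 := fun h ↦ by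
  simpa [testVector] using congrFun h (.inl ⟨0, hk⟩)

lemma distMatrix_isHermitian {V : Type*} [Fintype V] (G : SimpleGraph V) :
    (distMatrix G).IsHermitian := by
  ext i j
  simp [distMatrix, dist_comm]

lemma dotProduct_mulVec_div_le_distSpecRad {V : Type*} [Fintype V] (G : SimpleGraph V)
    {x : V → ℝ} (hx : x ≠ 0) : (x ⬝ᵥ distMatrix G *ᵥ x) / (x ⬝ᵥ x) ≤ distSpecRad G :=
  (distMatrix_isHermitian G).dotProduct_mulVec_div_le_sSup hx

theorem stmt9 (δ n : ℕ) (hδ : 2 ≤ δ) (hn : 8 * δ ≤ n) :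
    (n : ℝ) + (δ : ℝ) <
      distSpecRad (graphJoin (⊤ : SimpleGraph (Fin δ))
        (graphSum (⊤ : SimpleGraph (Fin (n - 2 * δ))) (⊥ : SimpleGraph (Fin δ)))) := by
  set m := n - 2 * δ
  have hδ' : (2 : ℝ) ≤ δ := by exact_mod_cast hδ
  have hm : (6 * δ : ℝ) ≤ m := by exact_mod_cast (by omega : 6 * δ ≤ m)
  have hn' : (n : ℝ) = m + 2 * δ := by exact_mod_cast (by omega : n = m + 2 * δ)
  refine lt_of_lt_of_le ?_ (dotProduct_mulVec_div_le_distSpecRad (joinCliqueSumIsolated δ m δ)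
    (testVector_ne_zero m δ (by omega)))
  rw [testVector_dotProduct_distMatrix_mulVec (by omega) (by omega), testVector_dotProduct_self,
    lt_div_iff₀ (by positivity), hn']
  nlinarith [mul_nonneg (sub_nonneg.2 hm) (by linarith : (0 : ℝ) ≤ 2 * δ - 1)]
end

section
/- Let δ and s be integers with 2 ≤ s ≤ δ − 1 (so δ ≥ 3) and let n ≥ max{8δ, δ²/2 + 2δ + 2}. Then λ₁(D(K_δ ∨ (K_{n−2δ} + δK₁))) < λ₁(D(K_s ∨ (K_{n−s−s(δ−s+1)} + sK_{δ−s+1}))). -/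
open SimpleGraph Finset

/-
Both graphs have the form `K_p ∨ (K_N + H)` with `H` regular. Such a graph has diameter at most
two, so its distance matrix is `2 (J - I) - A`, the partition into `K_p`, `K_N`, `H` is equitable,
and block-constant vectors are mapped through an explicit `3 × 3` quotient matrix. For each graph
take the block vector of an explicit approximate Perron vector of its quotient. For the second
graph its Rayleigh quotient `T` bounds `λ₁` from below. For the first graph the block vector `v`
satisfies `D v < T v` entrywise, and the Collatz–Wielandt argument for the symmetric nonnegative
matrix `D` gives `λ₁ < T`. After clearing denominators and substituting `s = x + 2`,
`δ = x + y + 3`, `n = m + δ²/2 + 2δ + 2` with `x, y, m ≥ 0`, the three entrywise inequalities are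
polynomials in `x, y, m` with nonnegative coefficients and positive constant term.
-/

open Matrix

section Spectral

variable {V : Type*} [Fintype V] {A : Matrix V V ℝ}

lemma finite_setOf_eigenvalue (A : Matrix V V ℝ) :
    {μ : ℝ | ∃ v : V → ℝ, v ≠ 0 ∧ A *ᵥ v = μ • v}.Finite := by
  classical
  exact (Module.End.finite_hasEigenvalue (Matrix.toLin' A)).subset fun _ ⟨v, hv, h⟩ =>
    Module.End.hasEigenvalue_of_hasEigenvector
      (Module.End.hasEigenvector_iff.2 ⟨Module.End.mem_eigenspace_iff.2 (by simpa using h), hv⟩)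

lemma exists_eigenvalue_ge_rayleigh (hA : A.IsHermitian) {x : V → ℝ} (hx : x ≠ 0) :
    ∃ μ, (∃ v : V → ℝ, v ≠ 0 ∧ A *ᵥ v = μ • v) ∧ (x ⬝ᵥ A *ᵥ x) / (x ⬝ᵥ x) ≤ μ := by
  classical
  set T := Matrix.toEuclideanLin A
  have hT : T.IsSymmetric := Matrix.isSymmetric_toEuclideanLin_iff.2 hA
  have : Nontrivial (EuclideanSpace ℝ V) := ⟨⟨WithLp.toLp 2 x, 0, by simpa using hx⟩⟩
  obtain ⟨v, hv⟩ := hT.hasEigenvalue_iSup_of_finiteDimensional.exists_hasEigenvector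
  refine ⟨⨆ y : {y : EuclideanSpace ℝ V // y ≠ 0},
    inner ℝ (T y) (y : EuclideanSpace ℝ V) / ‖(y : EuclideanSpace ℝ V)‖ ^ 2,
    ⟨WithLp.ofLp v, by simpa using hv.2, by simpa [T] using congrArg WithLp.ofLp hv.apply_eq_smul⟩,
    le_of_eq_of_le ?_ (le_ciSup ⟨‖LinearMap.toContinuousLinearMap T‖, ?_⟩
      ⟨WithLp.toLp 2 x, by simpa using hx⟩)⟩
  · rw [EuclideanSpace.real_norm_sq_eq]
    simp [T, EuclideanSpace.inner_eq_star_dotProduct, dotProduct, sq]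
  · rintro _ ⟨y, rfl⟩
    exact (le_abs_self _).trans ((LinearMap.toContinuousLinearMap T).rayleighQuotient_le_norm y)

/-- Strict Collatz–Wielandt: `|μ| |w| ≤ A |w|` entrywise, and pairing with `v` moves `A` onto `v`
by symmetry. -/
lemma eigenvalue_lt_of_mulVec_lt (hA : A.IsSymm) (hA₀ : ∀ i j, 0 ≤ A i j) {v : V → ℝ}
    (hv : ∀ i, 0 < v i) {T : ℝ} (hT : ∀ i, (A *ᵥ v) i < T * v i) {μ : ℝ} {w : V → ℝ}
    (hw : w ≠ 0) (hμ : A *ᵥ w = μ • w) : μ < T := by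
  set u : V → ℝ := fun i => |w i|
  have hu : ∀ i, |μ| * u i ≤ (A *ᵥ u) i := fun i =>
    calc |μ| * u i = |∑ j, A i j * w j| := by
          rw [← abs_mul, ← smul_eq_mul, ← Pi.smul_apply, ← hμ]; rfl
      _ ≤ ∑ j, |A i j * w j| := Finset.abs_sum_le_sum_abs _ _
      _ = (A *ᵥ u) i := by simp [mulVec, dotProduct, abs_mul, abs_of_nonneg (hA₀ i _), u]
  obtain ⟨i₀, hi₀⟩ := Function.ne_iff.mp hw
  have hvu : 0 < v ⬝ᵥ u := Finset.sum_pos' (fun i _ => mul_nonneg (hv i).le (abs_nonneg _))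
    ⟨i₀, Finset.mem_univ _, mul_pos (hv i₀) (abs_pos.2 hi₀)⟩
  have key : |μ| * (v ⬝ᵥ u) < T * (v ⬝ᵥ u) :=
    calc |μ| * (v ⬝ᵥ u) = ∑ i, v i * (|μ| * u i) := by
          simp only [dotProduct, Finset.mul_sum]; ring_nf
      _ ≤ ∑ i, v i * (A *ᵥ u) i :=
          Finset.sum_le_sum fun i _ => mul_le_mul_of_nonneg_left (hu i) (hv i).le
      _ = ∑ i, (A *ᵥ v) i * u i := by
          rw [← dotProduct, dotProduct_mulVec, ← mulVec_transpose, hA.eq]; rfl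
      _ < ∑ i, T * v i * u i := Finset.sum_lt_sum
          (fun i _ => mul_le_mul_of_nonneg_right (hT i).le (abs_nonneg _))
          ⟨i₀, Finset.mem_univ _, mul_lt_mul_of_pos_right (hT i₀) (abs_pos.2 hi₀)⟩
      _ = T * (v ⬝ᵥ u) := by simp only [dotProduct, Finset.mul_sum, mul_assoc]
  exact (le_abs_self μ).trans_lt (lt_of_mul_lt_mul_right key hvu.le)

end Spectral

section DistanceSpectralRadius

variable {V : Type*} [Fintype V] (G : SimpleGraph V)

lemma distMatrix_isSymm_s11 : (distMatrix G).IsSymm := by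
  ext i j
  simp [distMatrix, SimpleGraph.dist_comm]

lemma rayleigh_le_distSpecRad {x : V → ℝ} (hx : x ≠ 0) :
    (x ⬝ᵥ distMatrix G *ᵥ x) / (x ⬝ᵥ x) ≤ distSpecRad G := by
  obtain ⟨μ, hμ, hle⟩ := exists_eigenvalue_ge_rayleigh (distMatrix_isSymm_s11 G) hx
  exact hle.trans (le_csSup (finite_setOf_eigenvalue _).bddAbove hμ)

lemma distSpecRad_lt_of_mulVec_lt [Nonempty V] {v : V → ℝ} (hv : ∀ i, 0 < v i) {T : ℝ}
    (hT : ∀ i, (distMatrix G *ᵥ v) i < T * v i) : distSpecRad G < T := by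
  have hne : {μ : ℝ | ∃ w : V → ℝ, w ≠ 0 ∧ distMatrix G *ᵥ w = μ • w}.Nonempty :=
    let ⟨μ, hμ, _⟩ := exists_eigenvalue_ge_rayleigh (distMatrix_isSymm_s11 G) (x := 1) one_ne_zero
    ⟨μ, hμ⟩
  obtain ⟨w, hw, hμ⟩ := hne.csSup_mem (finite_setOf_eigenvalue _)
  exact eigenvalue_lt_of_mulVec_lt (distMatrix_isSymm_s11 G)
    (fun i j => Nat.cast_nonneg _) hv hT hw hμ

end DistanceSpectralRadius

section CommonNeighbor

variable {V : Type*} {G : SimpleGraph V}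

lemma SimpleGraph.dist_eq_of_forall_common_neighbor [DecidableEq V] [DecidableRel G.Adj]
    (h : ∀ u v, u ≠ v → ¬ G.Adj u v → ∃ w, G.Adj u w ∧ G.Adj w v) (u v : V) :
    G.dist u v = if u = v then 0 else if G.Adj u v then 1 else 2 := by
  split_ifs with huv hadj
  · rw [huv, SimpleGraph.dist_self]
  · exact SimpleGraph.dist_eq_one_iff_adj.2 hadj
  · obtain ⟨w, huw, hwv⟩ := h u v huv hadj
    have hle : G.dist u v ≤ 2 := by simpa using G.dist_le (Walk.cons huw hwv.toWalk)
    have h0 : G.dist u v ≠ 0 := SimpleGraph.dist_ne_zero_iff_ne_and_reachable.2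
      ⟨huv, (Walk.cons huw hwv.toWalk).reachable⟩
    have h1 : G.dist u v ≠ 1 := mt SimpleGraph.dist_eq_one_iff_adj.1 hadj
    omega

lemma distMatrix_mulVec_apply_of_forall_common_neighbor [Fintype V] [DecidableRel G.Adj]
    (h : ∀ u v, u ≠ v → ¬ G.Adj u v → ∃ w, G.Adj u w ∧ G.Adj w v) (x : V → ℝ) (i : V) :
    (distMatrix G *ᵥ x) i = 2 * (∑ j, x j - x i) - ∑ j, if G.Adj i j then x j else 0 := by
  classical
  have hij : ∀ j, (G.dist i j : ℝ) * x j =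
      2 * x j - (if i = j then 2 * x j else 0) - (if G.Adj i j then x j else 0) := by
    intro j
    rw [G.dist_eq_of_forall_common_neighbor h]
    split_ifs <;> simp_all
    ring
  simp only [mulVec, dotProduct, distMatrix, hij, Finset.sum_sub_distrib, Finset.sum_ite_eq,
    Finset.mem_univ, if_true, ← Finset.mul_sum]
  ring

end CommonNeighbor

section CliqueJoin

variable {p N : ℕ} {W : Type*} {H : SimpleGraph W}

abbrev cliqueJoin (p N : ℕ) (H : SimpleGraph W) : SimpleGraph (Fin p ⊕ (Fin N ⊕ W)) :=
  graphJoin (⊤ : SimpleGraph (Fin p)) (graphSum (⊤ : SimpleGraph (Fin N)) H)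

lemma cliqueJoin_forall_common_neighbor (hp : 0 < p) (u v : Fin p ⊕ (Fin N ⊕ W)) (huv : u ≠ v)
    (hadj : ¬ (cliqueJoin p N H).Adj u v) : ∃ w, (cliqueJoin p N H).Adj u w ∧
      (cliqueJoin p N H).Adj w v := by
  rcases u with i | y <;> rcases v with j | z
  · exact absurd (show i ≠ j by simpa using huv) hadj
  · exact absurd trivial hadj
  · exact absurd trivial hadj
  · exact ⟨Sum.inl ⟨0, hp⟩, trivial, trivial⟩

/-- The quotient matrix of the equitable partition `{K_p, K_N, H}` of `D(K_p ∨ (K_N + H))`,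
for `H` a `k`-regular graph on `r` vertices. -/
def joinQuotient (p N r k : ℝ) : Matrix (Fin 3) (Fin 3) ℝ :=
  !![p - 1, N, r; p, N - 1, 2 * r; p, 2 * N, 2 * r - 2 - k]

def blockVec (u : Fin 3 → ℝ) : Fin p ⊕ (Fin N ⊕ W) → ℝ :=
  Sum.elim (fun _ => u 0) (Sum.elim (fun _ => u 1) fun _ => u 2)

lemma distMatrix_cliqueJoin_mulVec_blockVec [Fintype W] [DecidableRel H.Adj] (hp : 0 < p) {k : ℕ}
    (hH : H.IsRegularOfDegree k) (u : Fin 3 → ℝ) :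
    distMatrix (cliqueJoin p N H) *ᵥ blockVec u =
      blockVec (joinQuotient p N (Fintype.card W) k *ᵥ u) := by
  -- not `classical`: the sums over `H.Adj` below must keep the given instance
  let : DecidableRel (cliqueJoin p N H).Adj := Classical.decRel _
  have hK : ∀ {m : ℕ} (i : Fin m) (c : ℝ), ∑ j, (if i = j then 0 else c) = (m - 1) * c := by
    intro m i c
    rw [Finset.sum_ite, Finset.sum_const_zero, zero_add, Finset.sum_const, Finset.filter_ne,
      Finset.card_erase_of_mem (Finset.mem_univ _)]
    simp [Nat.cast_pred i.pos]
  have hdeg : ∀ w, ∑ w', (if H.Adj w w' then u 2 else 0) = k * u 2 := fun w => by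
    rw [Finset.sum_ite, Finset.sum_const_zero, add_zero, Finset.sum_const, nsmul_eq_mul,
      ← neighborFinset_eq_filter, card_neighborFinset_eq_degree, hH.degree_eq]
  funext i
  rw [distMatrix_mulVec_apply_of_forall_common_neighbor (cliqueJoin_forall_common_neighbor hp)]
  rcases i with i | i | w <;>
    simp only [blockVec, graphJoin, graphSum, joinQuotient, mulVec, dotProduct, of_apply,
      Fintype.sum_sum_type, Sum.elim_inl, Sum.elim_inr, top_adj, ne_eq, ite_not, ↓reduceIte, hK,
      hdeg, Finset.sum_const, Finset.sum_const_zero, Finset.card_univ, Fintype.card_fin,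
      nsmul_eq_mul, add_zero, zero_add, Fin.sum_univ_three, Fin.isValue, Matrix.cons_val] <;>
    ring

lemma blockVec_dotProduct_blockVec [Fintype W] (u w : Fin 3 → ℝ) :
    (blockVec u : Fin p ⊕ (Fin N ⊕ W) → ℝ) ⬝ᵥ blockVec w =
      (![(p : ℝ), N, Fintype.card W] * u) ⬝ᵥ w := by
  simp only [dotProduct, blockVec, Fintype.sum_sum_type, Sum.elim_inl, Sum.elim_inr,
    Finset.sum_const, Finset.card_univ, Fintype.card_fin, nsmul_eq_mul, Pi.mul_apply,
    Fin.sum_univ_three, Fin.isValue, Matrix.cons_val]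
  ring

/-- The Rayleigh quotient of `blockVec u` for `D(K_p ∨ (K_N + H))`, computed in the quotient. -/
noncomputable def quotientRayleigh (p N r k : ℝ) (u : Fin 3 → ℝ) : ℝ :=
  ((![p, N, r] * u) ⬝ᵥ (joinQuotient p N r k *ᵥ u)) / ((![p, N, r] * u) ⬝ᵥ u)

lemma quotientRayleigh_le_distSpecRad [Fintype W] [DecidableRel H.Adj] (hp : 0 < p) {k : ℕ}
    (hH : H.IsRegularOfDegree k) {u : Fin 3 → ℝ} (hu : u 0 ≠ 0) :
    quotientRayleigh p N (Fintype.card W) k u ≤ distSpecRad (cliqueJoin p N H) := by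
  have hne : (blockVec u : Fin p ⊕ (Fin N ⊕ W) → ℝ) ≠ 0 :=
    fun h => hu (congrFun h (Sum.inl ⟨0, hp⟩))
  simpa [quotientRayleigh, distMatrix_cliqueJoin_mulVec_blockVec hp hH,
    blockVec_dotProduct_blockVec] using rayleigh_le_distSpecRad (cliqueJoin p N H) hne

lemma distSpecRad_cliqueJoin_lt [Fintype W] [DecidableRel H.Adj] (hp : 0 < p) {k : ℕ}
    (hH : H.IsRegularOfDegree k) {u : Fin 3 → ℝ} (hu : ∀ j, 0 < u j) {T : ℝ}
    (hT : ∀ j, (joinQuotient p N (Fintype.card W) k *ᵥ u) j < T * u j) :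
    distSpecRad (cliqueJoin p N H) < T := by
  have : Nonempty (Fin p ⊕ (Fin N ⊕ W)) := ⟨Sum.inl ⟨0, hp⟩⟩
  refine distSpecRad_lt_of_mulVec_lt _ (v := blockVec u) ?_ ?_
  · rintro (i | i | w) <;> exact hu _
  · rw [distMatrix_cliqueJoin_mulVec_blockVec hp hH]
    rintro (i | i | w) <;> exact hT _

end CliqueJoin

instance (m q : ℕ) : DecidableRel (repK m q).Adj :=
  fun x y => inferInstanceAs (Decidable (x.1 = y.1 ∧ x ≠ y))

lemma repK_isRegularOfDegree (m q : ℕ) : (repK m q).IsRegularOfDegree (q - 1) := by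
  intro v
  rw [← card_neighborFinset_eq_degree, neighborFinset_eq_filter]
  have : Finset.univ.filter ((repK m q).Adj v) = ({v.1} ×ˢ Finset.univ).erase v := by
    ext w
    simp only [Finset.mem_filter, Finset.mem_univ, true_and, Finset.mem_erase,
      Finset.mem_product, Finset.mem_singleton, and_true]
    exact ⟨fun h => ⟨h.2.symm, h.1.symm⟩, fun h => ⟨h.2.symm, h.1.symm⟩⟩
  simp [this]

section Comparison

open NNReal

/-- An approximate Perron vector of `joinQuotient p N r k` for large `N`. -/
def perronApprox (p N r k : ℝ) : Fin 3 → ℝ :=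
  ![p + N + 2 * r - 1, p + N + 4 * r - 1, p + 2 * N + 4 * r - 2 - 2 * k]

lemma perronApprox_pos {p N r k : ℝ} (hp : 1 ≤ p) (hN : 0 ≤ N) (hk : 0 ≤ k) (hkr : k + 1 ≤ r)
    (j : Fin 3) : 0 < perronApprox p N r k j := by
  fin_cases j <;>
    simp only [perronApprox, Fin.isValue, Fin.zero_eta, Fin.mk_one, Fin.reduceFinMk,
      Matrix.cons_val] <;>
    linarith

set_option maxHeartbeats 1000000 in
lemma joinQuotient_mulVec_perronApprox_lt {s δ n : ℝ} (hs : 2 ≤ s) (hsδ : s + 1 ≤ δ)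
    (hn : δ ^ 2 / 2 + 2 * δ + 2 ≤ n) (j : Fin 3) :
    (joinQuotient δ (n - 2 * δ) δ 0 *ᵥ perronApprox δ (n - 2 * δ) δ 0) j <
      quotientRayleigh s (n - s - s * (δ - s + 1)) (s * (δ - s + 1)) (δ - s)
        (perronApprox s (n - s - s * (δ - s + 1)) (s * (δ - s + 1)) (δ - s)) *
      perronApprox δ (n - 2 * δ) δ 0 j := by
  have hpos : ∀ {z : ℝ}, 0 ≤ z → ∃ z' : ℝ≥0, (z' : ℝ) = z := fun hz => ⟨_, Real.coe_toNNReal _ hz⟩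
  obtain ⟨x, hx⟩ := hpos (sub_nonneg.2 hs)
  obtain ⟨y, hy⟩ := hpos (sub_nonneg.2 hsδ)
  obtain ⟨m, hm⟩ := hpos (sub_nonneg.2 hn)
  obtain rfl : s = x + 2 := by linarith
  obtain rfl : δ = x + y + 3 := by linarith
  obtain rfl : n = m + ((x + y + 3) ^ 2 / 2 + 2 * (x + y + 3) + 2) := by linarith
  rw [quotientRayleigh, div_mul_eq_mul_div, lt_div_iff₀ (by
    simp only [perronApprox, dotProduct, Fin.sum_univ_three, Pi.mul_apply, Matrix.cons_val]
    ring_nf; positivity), ← sub_pos]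
  fin_cases j <;>
    simp only [joinQuotient, perronApprox, mulVec, dotProduct, Fin.sum_univ_three, Pi.mul_apply,
      Fin.isValue, Fin.zero_eta, Fin.mk_one, Fin.reduceFinMk, Matrix.of_apply,
      Matrix.cons_val] <;>
    ring_nf <;> positivity

end Comparison

theorem stmt11_general (δ s n : ℕ) (hs : 2 ≤ s) (hsδ : s ≤ δ - 1)
    (hn2 : (δ : ℝ) ^ 2 / 2 + 2 * δ + 2 ≤ (n : ℝ)) :
    distSpecRad (graphJoin (⊤ : SimpleGraph (Fin δ))
        (graphSum (⊤ : SimpleGraph (Fin (n - 2 * δ))) (⊥ : SimpleGraph (Fin δ))))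
      < distSpecRad (graphJoin (⊤ : SimpleGraph (Fin s))
        (graphSum (⊤ : SimpleGraph (Fin (n - s - s * (δ - s + 1)))) (repK s (δ - s + 1)))) := by
  have hsR : (2 : ℝ) ≤ s := by exact_mod_cast hs
  have hsδR : (s : ℝ) + 1 ≤ δ := by exact_mod_cast (by omega : s + 1 ≤ δ)
  have hq : ((δ - s : ℕ) : ℝ) = δ - s := Nat.cast_sub (by omega)
  have hN₁ : ((n - 2 * δ : ℕ) : ℝ) = n - 2 * δ := by
    rw [Nat.cast_sub (by exact_mod_cast (by nlinarith : (2 * δ : ℝ) ≤ n))]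
    push_cast
    ring
  have hN₂ : ((n - s - s * (δ - s + 1) : ℕ) : ℝ) = n - s - s * (δ - s + 1) := by
    have : ((s + s * (δ - s + 1) : ℕ) : ℝ) ≤ n := by
      push_cast [hq]
      nlinarith [sq_nonneg ((δ : ℝ) + 2 - 2 * s)]
    rw [Nat.sub_sub, Nat.cast_sub (by exact_mod_cast this)]
    push_cast [hq]
    ring
  calc _ < _ := distSpecRad_cliqueJoin_lt (N := n - 2 * δ) (by omega) IsRegularOfDegree.bot
        (u := perronApprox δ (n - 2 * δ) δ 0)
        (perronApprox_pos (by linarith) (by nlinarith) le_rfl (by linarith))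
        (fun j => by simpa [hN₁] using joinQuotient_mulVec_perronApprox_lt hsR hsδR hn2 j)
    _ ≤ _ := by
      simpa [hN₂, hq] using quotientRayleigh_le_distSpecRad (p := s)
        (N := n - s - s * (δ - s + 1)) (by omega) (repK_isRegularOfDegree s (δ - s + 1))
        (u := perronApprox s (n - s - s * (δ - s + 1)) (s * (δ - s + 1)) (δ - s))
        (perronApprox_pos (by linarith) (by nlinarith) (by linarith) (by nlinarith) 0).ne'

theorem stmt11 (δ s n : ℕ) (hs : 2 ≤ s) (hsδ : s ≤ δ - 1) (hδ : 3 ≤ δ)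
    (hn1 : 8 * δ ≤ n) (hn2 : (δ : ℝ) ^ 2 / 2 + 2 * δ + 2 ≤ (n : ℝ)) :
    distSpecRad (graphJoin (⊤ : SimpleGraph (Fin δ))
        (graphSum (⊤ : SimpleGraph (Fin (n - 2 * δ))) (⊥ : SimpleGraph (Fin δ))))
      < distSpecRad (graphJoin (⊤ : SimpleGraph (Fin s))
        (graphSum (⊤ : SimpleGraph (Fin (n - s - s * (δ - s + 1)))) (repK s (δ - s + 1)))) :=
  stmt11_general δ s n hs hsδ hn2
end

section
/- Let t ≥ 1 be an integer and n ≥ 4t² + 10t. Then λ₁(D(K_{2t−1} ∨ (K_{n−2t} + K₁))) < n + 2. -/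
open SimpleGraph Finset

/-!
A nonnegative matrix `A` with `A w ≤ c w` for some positive vector `w` has all its real
eigenvalues in `[-c, c]`: compare `A v = μ v` with `w` at a coordinate maximising `|v i| / w i`.
In `K_a ∨ (K_m + K_1)` with `a = 2t - 1`, `m = n - 2t`, every distance is `1` except the
distance `2` between the extra vertex and the vertices of `K_m`. Weighting the extra vertex by
`2 - ε` and the others by `1`, the weighted row sums of the distance matrix are at most
`n + 2 - 2ε`; on the extra vertex's row this reads `2n - 2t - 1 ≤ (n + 2 - 2ε)(2 - ε)`, which
holds with `ε = (2t + 5) / (n + 6)` since then the right side is `2n - 2t - 1 + 2ε²`.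
-/

open Matrix

theorem Matrix.abs_le_of_mulVec_eq_smul {ι : Type*} [Fintype ι] {A : Matrix ι ι ℝ}
    (hA : ∀ i j, 0 ≤ A i j) {w : ι → ℝ} (hw : ∀ i, 0 < w i) {c : ℝ} (hAw : A *ᵥ w ≤ c • w)
    {μ : ℝ} {v : ι → ℝ} (hv : v ≠ 0) (hμ : A *ᵥ v = μ • v) : |μ| ≤ c := by
  obtain ⟨j, hj⟩ := Function.ne_iff.mp hv
  obtain ⟨i, -, hi⟩ := exists_max_image univ (fun k ↦ |v k| / w k) ⟨j, mem_univ j⟩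
  set r := |v i| / w i
  have hvr (k : ι) : |v k| ≤ r * w k := (div_le_iff₀ (hw k)).mp (hi k (mem_univ k))
  have hr : 0 < r := (div_pos (abs_pos.mpr hj) (hw j)).trans_le (hi j (mem_univ j))
  have hvi : |v i| = r * w i := (div_mul_cancel₀ _ (hw i).ne').symm
  have key : |μ| * |v i| ≤ c * |v i| := calc
    |μ| * |v i| = |∑ k, A i k * v k| := by rw [← abs_mul, ← smul_eq_mul, ← Pi.smul_apply, ← hμ]; rfl
    _ ≤ ∑ k, A i k * |v k| := (abs_sum_le_sum_abs _ _).trans_eq <| by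
      simp only [abs_mul, abs_of_nonneg (hA _ _)]
    _ ≤ ∑ k, A i k * (r * w k) := by gcongr with k; exacts [hA i k, hvr k]
    _ = r * (A *ᵥ w) i := by
      rw [mulVec, dotProduct, mul_sum]; exact sum_congr rfl fun k _ ↦ by ring
    _ ≤ r * (c * w i) := by gcongr; exact hAw i
    _ = c * |v i| := by rw [hvi]; ring
  exact le_of_mul_le_mul_right key (hvi ▸ mul_pos hr (hw i))

theorem distSpecRad_le_of_mulVec_le {V : Type*} [Fintype V] (G : SimpleGraph V) {w : V → ℝ}
    (hw : ∀ i, 0 < w i) {c : ℝ} (hc : 0 ≤ c) (hGw : distMatrix G *ᵥ w ≤ c • w) :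
    distSpecRad G ≤ c :=
  Real.sSup_le (fun _ ⟨_, hv, hμ⟩ ↦ (le_abs_self _).trans <|
    Matrix.abs_le_of_mulVec_eq_smul (fun _ _ ↦ Nat.cast_nonneg _) hw hGw hv hμ) hc

theorem graphJoin_dist_eq_two {α β : Type*} [Nonempty α] [Nonempty β] (G : SimpleGraph α)
    (H : SimpleGraph β) {x y : α ⊕ β} (hxy : x ≠ y)
    (hadj : ¬ (graphJoin G H).Adj x y) : (graphJoin G H).dist x y = 2 := by
  suffices (graphJoin G H).edist x y = 2 by simp [SimpleGraph.dist, this]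
  refine edist_eq_two_iff.mpr ⟨hxy, hadj, ?_⟩
  rcases x with a | b <;> rcases y with a' | b'
  · exact ⟨.inr (Classical.arbitrary β), by simp [mem_commonNeighbors, graphJoin]⟩
  · exact absurd trivial hadj
  · exact absurd trivial hadj
  · exact ⟨.inl (Classical.arbitrary α), by simp [mem_commonNeighbors, graphJoin]⟩
theorem sum_ite_eq_zero_else_one {α : Type*} [Fintype α] [DecidableEq α] (i : α) :
    ∑ j, (if i = j then (0 : ℝ) else 1) = Fintype.card α - 1 := by
  simp [sum_ite, filter_ne, Nat.cast_pred (Fintype.card_pos_iff.mpr ⟨i⟩)]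

abbrev cliqueJoinCliqueSumVertex (α β : Type*) : SimpleGraph (α ⊕ (β ⊕ Fin 1)) :=
  graphJoin ⊤ (graphSum ⊤ ⊤)

namespace cliqueJoinCliqueSumVertex

variable {α β : Type*}

@[simp] theorem dist_inl_inl [DecidableEq α] (i j : α) :
    (cliqueJoinCliqueSumVertex α β).dist (.inl i) (.inl j) = if i = j then 0 else 1 := by
  split_ifs with h
  · simp [h]
  · exact dist_eq_one_iff_adj.mpr h

@[simp] theorem dist_inl_inr (i : α) (x : β ⊕ Fin 1) :
    (cliqueJoinCliqueSumVertex α β).dist (.inl i) (.inr x) = 1 :=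
  dist_eq_one_iff_adj.mpr trivial

@[simp] theorem dist_inr_inl (i : α) (x : β ⊕ Fin 1) :
    (cliqueJoinCliqueSumVertex α β).dist (.inr x) (.inl i) = 1 :=
  dist_eq_one_iff_adj.mpr trivial

@[simp] theorem dist_inr_inl_inr_inl [DecidableEq β] (b b' : β) :
    (cliqueJoinCliqueSumVertex α β).dist (.inr (.inl b)) (.inr (.inl b')) =
      if b = b' then 0 else 1 := by
  split_ifs with h
  · simp [h]
  · exact dist_eq_one_iff_adj.mpr h

@[simp] theorem dist_inr_inl_inr_inr [Nonempty α] (b : β) (z : Fin 1) :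
    (cliqueJoinCliqueSumVertex α β).dist (.inr (.inl b)) (.inr (.inr z)) = 2 :=
  graphJoin_dist_eq_two _ _ (by simp) id

@[simp] theorem dist_inr_inr_inr_inl [Nonempty α] (b : β) (z : Fin 1) :
    (cliqueJoinCliqueSumVertex α β).dist (.inr (.inr z)) (.inr (.inl b)) = 2 :=
  graphJoin_dist_eq_two _ _ (by simp) id

variable [Fintype α] [Fintype β] {s : ℝ}

variable (α β) in
def weight (s : ℝ) : α ⊕ (β ⊕ Fin 1) → ℝ :=
  Sum.elim 1 (Sum.elim 1 fun _ ↦ s)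

theorem distMatrix_mulVec_weight_inl [DecidableEq α] (i : α) :
    (distMatrix (cliqueJoinCliqueSumVertex α β) *ᵥ weight α β s) (.inl i) =
      Fintype.card α - 1 + Fintype.card β + s := by
  simp [weight, mulVec, dotProduct, Fintype.sum_sum_type, distMatrix, sum_ite_eq_zero_else_one, add_assoc]

theorem distMatrix_mulVec_weight_inr_inl [Nonempty α] [DecidableEq β] (b : β) :
    (distMatrix (cliqueJoinCliqueSumVertex α β) *ᵥ weight α β s) (.inr (.inl b)) =
      Fintype.card α + (Fintype.card β - 1) + 2 * s := by
  simp [weight, mulVec, dotProduct, Fintype.sum_sum_type, distMatrix, sum_ite_eq_zero_else_one, add_assoc]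

theorem distMatrix_mulVec_weight_inr_inr [Nonempty α] (z : Fin 1) :
    (distMatrix (cliqueJoinCliqueSumVertex α β) *ᵥ weight α β s) (.inr (.inr z)) =
      Fintype.card α + 2 * Fintype.card β := by
  simp [weight, mulVec, dotProduct, Fintype.sum_sum_type, distMatrix, Fin.fin_one_eq_zero, mul_comm]

theorem distSpecRad_le [Nonempty α] [DecidableEq α] [DecidableEq β] {c : ℝ} (hs : 0 < s)
    (hc : 0 ≤ c)
    (hα : Fintype.card α - 1 + Fintype.card β + s ≤ c)
    (hβ : Fintype.card α + (Fintype.card β - 1) + 2 * s ≤ c)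
    (hγ : Fintype.card α + 2 * Fintype.card β ≤ c * s) :
    distSpecRad (cliqueJoinCliqueSumVertex α β) ≤ c := by
  refine distSpecRad_le_of_mulVec_le _ (w := weight α β s) ?_ hc ?_
  · rintro (i | b | z) <;> simp [weight, hs]
  · rintro (i | b | z)
    · rw [distMatrix_mulVec_weight_inl]; simpa [weight] using hα
    · rw [distMatrix_mulVec_weight_inr_inl]; simpa [weight] using hβ
    · rw [distMatrix_mulVec_weight_inr_inr]; simpa [weight] using hγ

end cliqueJoinCliqueSumVertex

theorem stmt16 (t n : ℕ) (ht : 1 ≤ t) (hn : 4 * t ^ 2 + 10 * t ≤ n) :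
    distSpecRad (graphJoin (⊤ : SimpleGraph (Fin (2 * t - 1)))
        (graphSum (⊤ : SimpleGraph (Fin (n - 2 * t))) (⊤ : SimpleGraph (Fin 1))))
      < (n : ℝ) + 2 := by
  have h2t : 2 * t ≤ n := by nlinarith
  have : Nonempty (Fin (2 * t - 1)) := ⟨⟨0, by omega⟩⟩
  have hα : ((2 * t - 1 : ℕ) : ℝ) = 2 * t - 1 := by
    rw [Nat.cast_sub (by omega), Nat.cast_mul, Nat.cast_two, Nat.cast_one]
  have hβ : ((n - 2 * t : ℕ) : ℝ) = n - 2 * t := by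
    rw [Nat.cast_sub h2t, Nat.cast_mul, Nat.cast_two]
  set ε : ℝ := (2 * t + 5) / (n + 6)
  have hε : ε * (n + 6) = 2 * t + 5 := div_mul_cancel₀ _ (by positivity)
  have hε0 : 0 < ε := by positivity
  have hε1 : ε ≤ 1 :=
    (div_le_one (by positivity)).mpr (by exact_mod_cast (by omega : 2 * t + 5 ≤ n + 6))
  calc _ ≤ (n : ℝ) + 2 - 2 * ε := by
        refine cliqueJoinCliqueSumVertex.distSpecRad_le (s := 2 - ε) (by linarith)
          (by linarith [n.cast_nonneg (α := ℝ)]) ?_ ?_ ?_ <;> simp only [Fintype.card_fin, hα, hβ]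
        · linarith
        · linarith
        · nlinarith [sq_nonneg ε]
    _ < n + 2 := by linarith
end

section
/- Let δ ≥ 1 be an integer and n ≥ 2δ + 1. Then λ₁(D(K_δ ∨ (K_{n−2δ} + δK₁))) is the largest real root of the cubic equation x³ − (n + δ − 4)x² − (2δn + 3n − 5δ² + δ − 5)x + δ²n − 2δn − 2n − 2δ³ + 5δ² + 2 = 0. -/
open SimpleGraph Finset

open Matrix

/-!
Every vertex of `K_δ ∨ (K_{n-2δ} + δK₁)` is within distance two of every other, so off the
diagonal its distance matrix `D` depends only on which of the three parts `K_δ`, `K_{n-2δ}`,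
`δK₁` the two vertices lie in. For such a matrix, eigenvectors of the `3 × 3` quotient matrix
lift to eigenvectors of `D` that are constant on the parts, while an eigenvector of `D` either
has block sums forming an eigenvector of the transposed quotient matrix or has all block sums
zero, in which case its eigenvalue is `-1` or `-2`. The characteristic polynomial of the
quotient matrix is the given cubic, which is positive at `-1` and nonpositive at `n - 1`; so it
has a root larger than `-1`, and the largest eigenvalue of `D` is its largest root.
-/

theorem Matrix.mem_spectrum_iff_exists_mulVec_eq_smul {K n : Type*} [Field K] [Fintype n]
    [DecidableEq n] (A : Matrix n n K) (μ : K) :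
    μ ∈ spectrum K A ↔ ∃ v ≠ 0, A *ᵥ v = μ • v := by
  rw [← spectrum_toLin', ← Module.End.hasEigenvalue_iff_mem_spectrum,
    Module.End.hasEigenvalue_iff, Submodule.ne_bot_iff]
  simp only [Module.End.mem_eigenspace_iff, toLin'_apply, and_comm]

theorem Matrix.spectrum_transpose {K n : Type*} [Field K] [Fintype n] [DecidableEq n]
    (A : Matrix n n K) : spectrum K Aᵀ = spectrum K A := by
  ext μ
  simp only [mem_spectrum_iff_isRoot_charpoly, charpoly_transpose]

theorem SimpleGraph.dist_eq_two {V : Type*} {G : SimpleGraph V} {u v w : V} (huv : u ≠ v)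
    (hnadj : ¬ G.Adj u v) (huw : G.Adj u w) (hwv : G.Adj w v) : G.dist u v = 2 := by
  rw [SimpleGraph.dist, (SimpleGraph.edist_eq_two_iff).mpr ⟨huv, hnadj, w, huw, hwv.symm⟩]
  rfl

theorem isGreatest_csSup_of_subset_union {α : Type*} [ConditionallyCompleteLinearOrder α]
    {S R E : Set α} (hS : S.Finite) (hRS : R ⊆ S) (hSRE : S ⊆ R ∪ E) {x₀ : α}
    (hx₀ : x₀ ∈ R) (hE : ∀ e ∈ E, e < x₀) : IsGreatest R (sSup S) := by
  have hle : ∀ x ∈ R, x ≤ sSup S := fun x hx => le_csSup hS.bddAbove (hRS hx)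
  refine ⟨?_, hle⟩
  rcases hSRE (Set.Nonempty.csSup_mem ⟨x₀, hRS hx₀⟩ hS) with h | h
  · exact h
  · exact absurd (hle x₀ hx₀) (hE _ h).not_ge

theorem distSpecRad_eq_sSup_spectrum {V : Type*} [Fintype V] [DecidableEq V]
    (G : SimpleGraph V) : distSpecRad G = sSup (spectrum ℝ (distMatrix G)) := by
  unfold distSpecRad
  congr 1
  ext μ
  simp [mem_spectrum_iff_exists_mulVec_eq_smul]

section EquitablePartition

variable {V ι : Type*} [Fintype V] [Fintype ι] [DecidableEq ι]
  (π : V → ι) (W : Matrix ι ι ℝ) (d : ι → ℝ)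

def fiberSum (v : V → ℝ) (i : ι) : ℝ := ∑ x with π x = i, v x

def fiberCard (i : ι) : ℝ := #{x | π x = i}

def quotientMatrix : Matrix ι ι ℝ := W * diagonal (fiberCard π) - diagonal d

theorem fiberSum_comp (t : ι → ℝ) :
    fiberSum π (t ∘ π) = diagonal (fiberCard π) *ᵥ t := by
  ext i
  rw [mulVec_diagonal, fiberSum, fiberCard, Finset.sum_congr rfl fun x hx => by
    rw [Function.comp_apply, (Finset.mem_filter.mp hx).2]]
  simp

theorem mulVec_submatrix_sub_diagonal_apply [DecidableEq V] (v : V → ℝ) (x : V) :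
    ((W.submatrix π π - diagonal (d ∘ π)) *ᵥ v) x
      = (W *ᵥ fiberSum π v) (π x) - d (π x) * v x := by
  rw [sub_mulVec, Pi.sub_apply, mulVec_diagonal, Function.comp_apply]
  congr 1
  simp only [mulVec, dotProduct, submatrix_apply, fiberSum, Finset.mul_sum]
  rw [← Finset.sum_fiberwise Finset.univ π]
  refine Finset.sum_congr rfl fun j _ => Finset.sum_congr rfl fun y hy => ?_
  rw [(Finset.mem_filter.mp hy).2]

theorem spectrum_quotientMatrix_subset [DecidableEq V]
    (hπ : Function.Surjective π) :
    spectrum ℝ (quotientMatrix π W d)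
      ⊆ spectrum ℝ (W.submatrix π π - diagonal (d ∘ π)) := by
  intro μ hμ
  rw [mem_spectrum_iff_exists_mulVec_eq_smul] at hμ ⊢
  obtain ⟨t, ht0, ht⟩ := hμ
  refine ⟨t ∘ π, fun h => ht0 (funext fun i => ?_), funext fun x => ?_⟩
  · obtain ⟨x, rfl⟩ := hπ i
    exact congrFun h x
  · have htx := congrFun ht (π x)
    rw [quotientMatrix, sub_mulVec, ← mulVec_mulVec, Pi.sub_apply, mulVec_diagonal] at htx
    rw [mulVec_submatrix_sub_diagonal_apply, fiberSum_comp]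
    simpa using htx

theorem spectrum_submatrix_sub_diagonal_subset [DecidableEq V] (hW : W.IsSymm) :
    spectrum ℝ (W.submatrix π π - diagonal (d ∘ π))
      ⊆ spectrum ℝ (quotientMatrix π W d) ∪ Set.range (-d) := by
  intro μ hμ
  rw [mem_spectrum_iff_exists_mulVec_eq_smul] at hμ
  obtain ⟨v, hv0, hv⟩ := hμ
  set s := fiberSum π v
  have hvx (x : V) : (μ + d (π x)) * v x = (W *ᵥ s) (π x) := by
    have := congrFun hv x
    rw [mulVec_submatrix_sub_diagonal_apply, Pi.smul_apply, smul_eq_mul] at this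
    linarith
  by_cases hs : s = 0
  · right
    obtain ⟨x, hx⟩ := Function.ne_iff.mp hv0
    refine ⟨π x, ?_⟩
    have := hvx x
    rw [hs, mulVec_zero, Pi.zero_apply, mul_eq_zero] at this
    rw [Pi.neg_apply, neg_eq_iff_eq_neg, eq_neg_iff_add_eq_zero, add_comm]
    exact this.resolve_right hx
  · left
    rw [← spectrum_transpose, mem_spectrum_iff_exists_mulVec_eq_smul]
    refine ⟨s, hs, funext fun i => ?_⟩
    have hsum : (μ + d i) * s i = fiberCard π i * (W *ᵥ s) i := by
      simp only [s, fiberSum, fiberCard, Finset.mul_sum]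
      rw [← nsmul_eq_mul, ← Finset.sum_const]
      refine Finset.sum_congr rfl fun x hx => ?_
      rw [← (Finset.mem_filter.mp hx).2, hvx]
    rw [quotientMatrix, transpose_sub, transpose_mul, diagonal_transpose, diagonal_transpose,
      hW.eq, sub_mulVec, ← mulVec_mulVec, Pi.sub_apply, mulVec_diagonal, mulVec_diagonal,
      Pi.smul_apply, smul_eq_mul]
    linarith

end EquitablePartition

def joinPart (δ m : ℕ) : Fin δ ⊕ (Fin m ⊕ Fin δ) → Fin 3 :=
  Sum.elim (fun _ => 0) (Sum.elim (fun _ => 1) fun _ => 2)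

/-- `partDist i j` is the distance between distinct vertices in parts `i` and `j`; subtracting
`partDiag` on the diagonal makes the distance matrix vanish there. -/
def partDist : Matrix (Fin 3) (Fin 3) ℝ := !![1, 1, 1; 1, 1, 2; 1, 2, 2]

def partDiag : Fin 3 → ℝ := ![1, 1, 2]

theorem distMatrix_graphJoin_graphSum (δ m : ℕ) :
    distMatrix (graphJoin (⊤ : SimpleGraph (Fin δ))
      (graphSum (⊤ : SimpleGraph (Fin m)) (⊥ : SimpleGraph (Fin δ))))
      = partDist.submatrix (joinPart δ m) (joinPart δ m)
        - diagonal (partDiag ∘ joinPart δ m) := by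
  ext x y
  rw [distMatrix]
  simp only [Matrix.sub_apply, submatrix_apply, diagonal_apply, Function.comp_apply]
  by_cases hxy : x = y
  · subst hxy
    rcases x with i | i | i <;> simp [joinPart, partDist, partDiag]
  rw [if_neg hxy, sub_zero]
  rcases x with i | i | i <;> rcases y with j | j | j
  case inr.inl.inr.inr | inr.inr.inr.inr =>
    rw [SimpleGraph.dist_eq_two hxy (by simp [graphJoin, graphSum]) (w := Sum.inl j) trivial
      trivial]
    simp [joinPart, partDist]
  case inr.inr.inr.inl =>
    rw [SimpleGraph.dist_eq_two hxy (by simp [graphJoin, graphSum]) (w := Sum.inl i) trivial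
      trivial]
    simp [joinPart, partDist]
  all_goals
    rw [SimpleGraph.dist_eq_one_iff_adj.mpr (by simp_all [graphJoin, graphSum])]
    simp [joinPart, partDist]

theorem joinPart_surjective {δ m : ℕ} (hδ : 0 < δ) (hm : 0 < m) :
    Function.Surjective (joinPart δ m) := by
  intro i
  fin_cases i
  exacts [⟨Sum.inl ⟨0, hδ⟩, rfl⟩, ⟨Sum.inr (Sum.inl ⟨0, hm⟩), rfl⟩,
    ⟨Sum.inr (Sum.inr ⟨0, hδ⟩), rfl⟩]

theorem partDist_isSymm : partDist.IsSymm := by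
  ext i j
  fin_cases i <;> fin_cases j <;> rfl

theorem fiberCard_joinPart (δ m : ℕ) : fiberCard (joinPart δ m) = ![(δ : ℝ), m, δ] := by
  ext i
  rw [fiberCard, Finset.card_filter, Fintype.sum_sum_type, Fintype.sum_sum_type]
  fin_cases i <;> simp [joinPart]

def distCubic (δ n x : ℝ) : ℝ :=
  x ^ 3 - (n + δ - 4) * x ^ 2 - (2 * δ * n + 3 * n - 5 * δ ^ 2 + δ - 5) * x
    + (δ ^ 2 * n - 2 * δ * n - 2 * n - 2 * δ ^ 3 + 5 * δ ^ 2 + 2)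

theorem spectrum_quotientMatrix_joinPart (δ m : ℕ) :
    spectrum ℝ (quotientMatrix (joinPart δ m) partDist partDiag)
      = {x | distCubic δ (m + 2 * δ) x = 0} := by
  ext x
  rw [mem_spectrum_iff_isRoot_charpoly, Polynomial.IsRoot, eval_charpoly, quotientMatrix,
    fiberCard_joinPart, det_fin_three]
  simp [partDist, partDiag, distCubic, vecMul_diagonal]
  ring_nf

theorem exists_gt_neg_one_distCubic_eq_zero {δ n : ℝ} (hδ : 0 < δ) (hn : 2 * δ + 1 ≤ n) :
    ∃ x, -1 < x ∧ distCubic δ n x = 0 := by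
  have hleft : distCubic δ n (-1) = δ ^ 2 * (n - 2 * δ) := by
    unfold distCubic; ring
  have hright :
      distCubic δ n (n - 1) = -(δ * (3 * n * (n - 2 * δ - 1) + 2 * n + 2 * δ ^ 2)) := by
    unfold distCubic; ring
  have hcont : Continuous (distCubic δ n) := by
    unfold distCubic; fun_prop
  have hleft_pos : 0 < distCubic δ n (-1) := by
    have : 0 < n - 2 * δ := by linarith
    rw [hleft]
    positivity
  have hright_nonpos : distCubic δ n (n - 1) ≤ 0 := by
    rw [hright, neg_nonpos]
    have : 0 ≤ n - 2 * δ - 1 := by linarith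
    have : 0 ≤ n := by linarith
    positivity
  obtain ⟨x, hx, hx0⟩ := intermediate_value_Icc' (by linarith : (-1 : ℝ) ≤ n - 1)
    hcont.continuousOn ⟨hright_nonpos, hleft_pos.le⟩
  refine ⟨x, lt_of_le_of_ne hx.1 ?_, hx0⟩
  rintro rfl
  exact hleft_pos.ne' hx0

theorem stmt18 (δ n : ℕ) (hδ : 1 ≤ δ) (hn : 2 * δ + 1 ≤ n) :
    let L := distSpecRad (graphJoin (⊤ : SimpleGraph (Fin δ))
      (graphSum (⊤ : SimpleGraph (Fin (n - 2 * δ))) (⊥ : SimpleGraph (Fin δ))))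
    let P : ℝ → ℝ := fun x =>
      x ^ 3 - ((n : ℝ) + (δ : ℝ) - 4) * x ^ 2
        - (2 * (δ : ℝ) * (n : ℝ) + 3 * (n : ℝ) - 5 * (δ : ℝ) ^ 2 + (δ : ℝ) - 5) * x
        + ((δ : ℝ) ^ 2 * (n : ℝ) - 2 * (δ : ℝ) * (n : ℝ) - 2 * (n : ℝ)
            - 2 * (δ : ℝ) ^ 3 + 5 * (δ : ℝ) ^ 2 + 2)
    P L = 0 ∧ ∀ x : ℝ, P x = 0 → x ≤ L := by
  intro L P
  have hQ := spectrum_quotientMatrix_joinPart δ (n - 2 * δ)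
  rw [Nat.cast_sub (by omega), Nat.cast_mul, Nat.cast_two, sub_add_cancel] at hQ
  obtain ⟨x₀, hx₀, hroot⟩ := exists_gt_neg_one_distCubic_eq_zero (δ := δ) (n := n)
    (by exact_mod_cast hδ) (by exact_mod_cast hn)
  show IsGreatest {x | distCubic δ n x = 0} (distSpecRad _)
  rw [distSpecRad_eq_sSup_spectrum, distMatrix_graphJoin_graphSum, ← hQ]
  refine isGreatest_csSup_of_subset_union (finite_spectrum _)
    (spectrum_quotientMatrix_subset _ _ _ (joinPart_surjective hδ (by omega)))
    (spectrum_submatrix_sub_diagonal_subset _ _ _ partDist_isSymm) (hQ.superset hroot) ?_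
  rintro _ ⟨i, rfl⟩
  fin_cases i <;> simp [partDiag] <;> linarith
end
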